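/- arXiv:2107.11715 — 4 statements merged into one kernel-verified Lean document; each statement's English description precedes it below -/
import Mathlib

section
/- The poset N(m,n) admits a symmetric chain decomposition: there is a partition of N(m,n) into saturated chains C such that each C consists of consecutive ranks (each element covers the previous one) and rank(min C) + rank(max C) = mn. -/
/-- The rank of an element of `N(m,n)`: the sum of its coordinates. -/
def nRank {m n : ℕ} (c : Fin m → Fin (n + 1)) : ℕ := ∑ i, (c i : ℕ)

/-- `b` is covered by `c`: `bᵢ ≤ cᵢ` for all `i` and the rank increases by
exactly `1` (in `N(m,n)` this is exactly the covering relation). -/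
def nStep {m n : ℕ} (b c : Fin m → Fin (n + 1)) : Prop :=
  (∀ i, (b i : ℕ) ≤ (c i : ℕ)) ∧ nRank c = nRank b + 1

namespace SCDaux

variable {m n : ℕ}

lemma nRank_snoc (x : Fin m → Fin (n+1)) (v : Fin (n+1)) :
    nRank (Fin.snoc x v) = nRank x + v := by
  unfold nRank
  rw [Fin.sum_univ_castSucc]
  simp

lemma nStep_snoc_left {x y : Fin m → Fin (n+1)} (h : nStep x y) (v : Fin (n+1)) :
    nStep (Fin.snoc x v) (Fin.snoc y v) := by
  constructor
  · intro i
    refine Fin.lastCases ?_ ?_ i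
    · simp
    · intro j; simp only [Fin.snoc_castSucc]; exact h.1 j
  · rw [nRank_snoc, nRank_snoc, h.2]; omega

lemma nStep_snoc_step (x : Fin m → Fin (n+1)) {v w : Fin (n+1)}
    (h : (v:ℕ) + 1 = (w:ℕ)) : nStep (Fin.snoc x v) (Fin.snoc x w) := by
  constructor
  · intro i
    refine Fin.lastCases ?_ ?_ i
    · simp; omega
    · intro j; simp
  · rw [nRank_snoc, nRank_snoc]; omega

/-- The `i`-th element of a list of tuples (with default). -/
def elt (l : List (Fin m → Fin (n+1))) (i : ℕ) : Fin m → Fin (n+1) :=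
  l.getD i default

lemma elt_eq_get (l : List (Fin m → Fin (n+1))) {i : ℕ} (h : i < l.length) :
    elt l i = l.get ⟨i, h⟩ := List.getD_eq_getElem l default h

lemma elt_mem (l : List (Fin m → Fin (n+1))) {i : ℕ} (h : i < l.length) :
    elt l i ∈ l := by rw [elt_eq_get l h]; exact List.get_mem _ _

lemma mem_iff_elt {l : List (Fin m → Fin (n+1))} {c : Fin m → Fin (n+1)} :
    c ∈ l ↔ ∃ i, ∃ _ : i < l.length, elt l i = c := by
  rw [List.mem_iff_get]
  constructor
  · rintro ⟨⟨i, hi⟩, rfl⟩; exact ⟨i, hi, elt_eq_get l hi⟩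
  · rintro ⟨i, hi, rfl⟩; exact ⟨⟨i, hi⟩, (elt_eq_get l hi).symm⟩

lemma nRank_elt {l : List (Fin m → Fin (n+1))} (hl : l.Chain' nStep) :
    ∀ i, i < l.length → nRank (elt l i) = nRank (elt l 0) + i := by
  intro i
  induction i with
  | zero => intro h; simp
  | succ i ih =>
    intro h
    have h1 : i < l.length - 1 := by omega
    have step : nStep (l.get ⟨i, by omega⟩) (l.get ⟨i+1, by omega⟩) := (List.isChain_iff_getElem.1 hl) i (by omega)
    have e1 : elt l (i+1) = l.get ⟨i+1, by omega⟩ := elt_eq_get l (by omega)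
    have e2 : elt l i = l.get ⟨i, by omega⟩ := elt_eq_get l (by omega)
    rw [e1, step.2, ← e2, ih (by omega)]
    ring

lemma elt_inj {l : List (Fin m → Fin (n+1))} (hl : l.Chain' nStep)
    {i j : ℕ} (hi : i < l.length) (hj : j < l.length) (h : elt l i = elt l j) :
    i = j := by
  have hri := nRank_elt hl i hi
  have hrj := nRank_elt hl j hj
  rw [h] at hri
  omega

lemma nStep_elt {l : List (Fin m → Fin (n+1))} (hl : l.Chain' nStep)
    {i : ℕ} (hi : i + 1 < l.length) : nStep (elt l i) (elt l (i+1)) := by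
  rw [elt_eq_get l (by omega : i < l.length), elt_eq_get l hi]
  exact (List.isChain_iff_getElem.1 hl) i (by omega)

/-- Element `t` of the hook chain built from chain `C` and parameter `k`. -/
def hookFun (C : List (Fin m → Fin (n+1))) (k t : ℕ) : Fin (m+1) → Fin (n+1) :=
  if t ≤ n - k then Fin.snoc (elt C k) ⟨min t n, by omega⟩
  else Fin.snoc (elt C (k + (t - (n - k)))) ⟨min (n - k) n, by omega⟩

/-- Length of the hook chain. -/
def hookLen (C : List (Fin m → Fin (n+1))) (k : ℕ) : ℕ :=
  (n - k) + (C.length - k)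

/-- The hook chain. -/
def hook (C : List (Fin m → Fin (n+1))) (k : ℕ) : List (Fin (m+1) → Fin (n+1)) :=
  (List.range (hookLen C k)).map (hookFun C k)

lemma hook_length (C : List (Fin m → Fin (n+1))) (k : ℕ) :
    (hook C k).length = hookLen C k := by simp [hook]

lemma hook_get (C : List (Fin m → Fin (n+1))) (k : ℕ) {t : ℕ} (ht : t < hookLen C k) :
    (hook C k).get ⟨t, by rw [hook_length]; exact ht⟩ = hookFun C k t := by
  simp [hook]

lemma mem_hook {C : List (Fin m → Fin (n+1))} {k : ℕ} {c : Fin (m+1) → Fin (n+1)} :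
    c ∈ hook C k ↔ ∃ t, ∃ _ : t < hookLen C k, hookFun C k t = c := by
  simp only [hook, List.mem_map, List.mem_range]
  constructor
  · rintro ⟨t, ht, rfl⟩; exact ⟨t, ht, rfl⟩
  · rintro ⟨t, ht, rfl⟩; exact ⟨t, ht, rfl⟩

lemma hook_chain' {C : List (Fin m → Fin (n+1))} {k : ℕ} (hC : C.Chain' nStep)
    (hk : k ≤ n) (hkC : k < C.length) : (hook C k).Chain' nStep := by
  rw [hook]; change List.IsChain _ _; rw [List.isChain_map, List.isChain_iff_getElem]
  intro t ht
  simp only [List.length_range] at ht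
  rw [List.getElem_range, List.getElem_range]
  by_cases h1 : t + 1 ≤ n - k
  · unfold hookFun
    rw [if_pos (by omega), if_pos h1]
    exact nStep_snoc_step _ (by simp only [Fin.val_mk]; omega)
  · by_cases h0 : t ≤ n - k
    · -- boundary step: t = n - k
      have hlen : k + 1 < C.length := by
        unfold hookLen at ht; omega
      unfold hookFun
      rw [if_pos h0, if_neg h1]
      have hidx : k + (t + 1 - (n - k)) = k + 1 := by omega
      rw [hidx]
      have hv1 : min t n = n - k := by omega
      have hv2 : min (n - k) n = n - k := by omega
      simp only [hv1, hv2]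
      exact nStep_snoc_left (nStep_elt hC hlen) _
    · -- row step
      unfold hookFun
      rw [if_neg h0, if_neg h1]
      have hidx : k + (t + 1 - (n - k)) = (k + (t - (n - k))) + 1 := by omega
      have hlen : (k + (t - (n - k))) + 1 < C.length := by
        unfold hookLen at ht; omega
      rw [hidx]
      exact nStep_snoc_left (nStep_elt hC hlen) _

lemma hook_ne_nil {C : List (Fin m → Fin (n+1))} {k : ℕ} (hkC : k < C.length) :
    hook C k ≠ [] := by
  simp only [hook, ne_eq, List.map_eq_nil_iff, List.range_eq_nil, hookLen]
  omega

lemma hook_head {C : List (Fin m → Fin (n+1))} {k : ℕ} (hkC : k < C.length) :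
    (hook C k).head? = some (Fin.snoc (elt C k) ⟨0, by omega⟩) := by
  have hne := hook_ne_nil (C := C) (k := k) hkC
  have h0 : 0 < (hook C k).length := List.length_pos_iff.2 hne
  have h0' : 0 < hookLen C k := by rwa [hook_length] at h0
  rw [List.head?_eq_head hne, ← List.get_mk_zero h0, hook_get C k h0']
  unfold hookFun
  rw [if_pos (by omega)]
  have : min 0 n = 0 := by omega
  simp only [this]

lemma hook_last {C : List (Fin m → Fin (n+1))} {k : ℕ} (hk : k ≤ n) (hkC : k < C.length) :
    (hook C k).getLast? = some (Fin.snoc (elt C (C.length - 1)) ⟨n - k, by omega⟩) := by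
  have hne := hook_ne_nil (C := C) (k := k) hkC
  rw [List.getLast?_eq_getLast hne, List.getLast_eq_getElem]
  have hL : hookLen C k - 1 < hookLen C k := by unfold hookLen; omega
  have hpos : 0 < (hook C k).length := by rw [hook_length]; unfold hookLen; omega
  have hg : (hook C k).get ⟨(hook C k).length - 1, by omega⟩ = hookFun C k (hookLen C k - 1) := by
    have : (hook C k).length - 1 = hookLen C k - 1 := by rw [hook_length]
    rw [← hook_get C k hL]
    congr 1
    exact Fin.ext (by simpa using this)
  refine (congrArg some hg).trans ?_
  unfold hookFun
  by_cases hc : C.length - 1 = k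
  · rw [if_pos (by unfold hookLen; omega)]
    have h1 : hookLen C k - 1 = n - k := by unfold hookLen; omega
    have h2 : min (hookLen C k - 1) n = n - k := by unfold hookLen; omega
    simp only [h2, hc]
  · rw [if_neg (by unfold hookLen; omega)]
    have h1 : k + (hookLen C k - 1 - (n - k)) = C.length - 1 := by unfold hookLen; omega
    have h2 : min (n - k) n = n - k := by omega
    simp only [h1, h2]

end SCDaux

open SCDaux in
/-- Main induction: SCD exists for every `m`, `n`. -/
theorem scd_exists (m n : ℕ) :
    ∃ chains : Finset (List (Fin m → Fin (n + 1))),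
      (∀ C ∈ chains, C.Chain' nStep ∧
        ∃ a b, C.head? = some a ∧ C.getLast? = some b ∧ nRank a + nRank b = m * n) ∧
      (∀ c : Fin m → Fin (n + 1), ∃! C, C ∈ chains ∧ c ∈ C) := by
  induction m with
  | zero =>
    refine ⟨{[default]}, ?_, ?_⟩
    · intro C hC
      simp only [Finset.mem_singleton] at hC
      subst hC
      refine ⟨List.isChain_singleton _, default, default, rfl, rfl, ?_⟩
      simp [nRank]
    · intro c
      refine ⟨[default], ⟨by simp, ?_⟩, ?_⟩
      · have : c = default := Subsingleton.elim _ _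
        simp [this]
      · rintro D ⟨hD, -⟩
        simpa using hD
  | succ m ih =>
    obtain ⟨chains, h1, h2⟩ := ih
    refine ⟨chains.biUnion (fun C => (Finset.range (min C.length (n+1))).image (hook C)), ?_, ?_⟩
    · -- chain properties
      intro D hD
      simp only [Finset.mem_biUnion, Finset.mem_image, Finset.mem_range, lt_min_iff] at hD
      obtain ⟨C, hC, k, ⟨hkC, hkn'⟩, rfl⟩ := hD
      have hkn : k ≤ n := by omega
      have hCchain := (h1 C hC).1
      obtain ⟨a, b, ha, hb, hab⟩ := (h1 C hC).2
      have hCne : C ≠ [] := by intro h; rw [h] at ha; simp at ha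
      have hCpos : 0 < C.length := List.length_pos_iff.2 hCne
      refine ⟨hook_chain' hCchain hkn hkC, _, _, hook_head hkC, hook_last hkn hkC, ?_⟩
      -- ranks
      have ha' : a = elt C 0 := by
        rw [elt_eq_get C hCpos, List.get_mk_zero hCpos, List.head?_eq_head hCne] at *
        exact (Option.some_injective _ ha).symm
      have hb' : b = elt C (C.length - 1) := by
        rw [List.getLast?_eq_getLast hCne, List.getLast_eq_getElem] at hb
        rw [elt_eq_get C (by omega)]
        exact (Option.some_injective _ hb).symm
      rw [nRank_snoc, nRank_snoc]
      have r1 : nRank (elt C k) = nRank (elt C 0) + k := nRank_elt hCchain k hkC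
      have r2 : nRank (elt C (C.length - 1)) = nRank (elt C 0) + (C.length - 1) :=
        nRank_elt hCchain _ (by omega)
      rw [r1, r2]
      rw [ha', hb', r2] at hab
      have hmn : (m + 1) * n = m * n + n := by ring
      rw [hmn]
      simp only [Fin.val_mk]
      omega
    · -- partition
      intro c
      have hcsnoc : Fin.snoc (Fin.init c) (c (Fin.last m)) = c := Fin.snoc_init_self c
      set c' : Fin m → Fin (n+1) := Fin.init c with hc'
      set j : Fin (n+1) := c (Fin.last m) with hj
      obtain ⟨C₀, ⟨hC₀, hcC₀⟩, huniq⟩ := h2 c'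
      have hCchain := (h1 C₀ hC₀).1
      obtain ⟨i₀, hi₀, hei₀⟩ := mem_iff_elt.1 hcC₀
      set k₀ := min i₀ (n - (j:ℕ)) with hk₀
      have hjn : (j:ℕ) ≤ n := by omega
      have hk₀C : k₀ < C₀.length := by omega
      have hk₀n : k₀ ≤ n := by omega
      -- c ∈ hook C₀ k₀
      have hmem : c ∈ hook C₀ k₀ := by
        rw [mem_hook]
        by_cases hcase : i₀ ≤ n - (j:ℕ)
        · refine ⟨(j:ℕ), by unfold hookLen; omega, ?_⟩
          unfold hookFun
          rw [if_pos (by omega)]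
          have hkk : k₀ = i₀ := by omega
          have hv : min (j:ℕ) n = (j:ℕ) := by omega
          rw [hkk, hei₀, ← hcsnoc]
          simp only [hv, Fin.eta]
        · refine ⟨(n - k₀) + (i₀ - k₀), by unfold hookLen; omega, ?_⟩
          unfold hookFun
          rw [if_neg (by omega)]
          have hidx : k₀ + ((n - k₀) + (i₀ - k₀) - (n - k₀)) = i₀ := by omega
          have hv : min (n - k₀) n = (j:ℕ) := by omega
          rw [hidx, hei₀, ← hcsnoc]
          simp only [hv, Fin.eta]
      refine ⟨hook C₀ k₀, ⟨?_, hmem⟩, ?_⟩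
      · simp only [Finset.mem_biUnion, Finset.mem_image, Finset.mem_range, lt_min_iff]
        exact ⟨C₀, hC₀, k₀, ⟨by omega, by omega⟩, rfl⟩
      · rintro D ⟨hD, hcD⟩
        simp only [Finset.mem_biUnion, Finset.mem_image, Finset.mem_range, lt_min_iff] at hD
        obtain ⟨C, hC, k, ⟨hkC, hkn'⟩, rfl⟩ := hD
        have hkn : k ≤ n := by omega
        obtain ⟨t, ht, hft⟩ := mem_hook.1 hcD
        unfold hookFun at hft
        by_cases hcase : t ≤ n - k
        · rw [if_pos hcase] at hft
          have hinit : c' = elt C k := by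
            rw [hc', ← hft]
            simp
          have hjval : (j:ℕ) = t := by
            rw [hj, ← hft]
            simp only [Fin.snoc_last, Fin.val_mk]
            omega
          have hCeq : C = C₀ := huniq C ⟨hC, hinit ▸ elt_mem C hkC⟩
          subst hCeq
          have hieq : k = i₀ := elt_inj hCchain hkC hi₀ (by rw [← hinit, hei₀])
          have hfin : k₀ = k := by omega
          rw [hfin]
        · rw [if_neg hcase] at hft
          set i := k + (t - (n - k)) with hi
          have hiC : i < C.length := by
            unfold hookLen at ht; omega
          have hinit : c' = elt C i := by
            rw [hc', ← hft]
            simp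
          have hjval : (j:ℕ) = n - k := by
            rw [hj, ← hft]
            simp only [Fin.snoc_last, Fin.val_mk]
            omega
          have hCeq : C = C₀ := huniq C ⟨hC, hinit ▸ elt_mem C hiC⟩
          subst hCeq
          have hieq : i = i₀ := elt_inj hCchain hiC hi₀ (by rw [← hinit, hei₀])
          have hfin : k₀ = k := by omega
          rw [hfin]

/-- `N(m,n)` admits a symmetric chain decomposition: a partition into
saturated chains `C` (each element covers the previous, so the ranks are
consecutive) with `rank(min C) + rank(max C) = mn`. -/
theorem stmt_5 (m n : ℕ) (hm : 0 < m) (hn : 0 < n) :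
    ∃ chains : Finset (List (Fin m → Fin (n + 1))),
      (∀ C ∈ chains, C.Chain' nStep ∧
        ∃ a b, C.head? = some a ∧ C.getLast? = some b ∧ nRank a + nRank b = m * n) ∧
      (∀ c : Fin m → Fin (n + 1), ∃! C, C ∈ chains ∧ c ∈ C) := by
  exact scd_exists m n
end

section
/- The rank sizes of N(m,n) are unimodal and symmetric: letting N_k denote the number of elements of rank k, one has N_k = N_{mn−k} for all k, and N_0 ≤ N_1 ≤ ⋯ ≤ N_{⌊mn/2⌋}. -/
/-- The number of elements of `N(m,n)` of rank `k`. -/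
def nCount (m n k : ℕ) : ℕ :=
  (Finset.univ.filter fun c : Fin m → Fin (n + 1) => nRank c = k).card

/-- Integer-indexed version of `nCount`. -/
def F (n m : ℕ) : ℤ → ℕ := fun k => if 0 ≤ k then nCount m n k.toNat else 0

lemma F_of_nonneg {n m : ℕ} {k : ℤ} (h : 0 ≤ k) : F n m k = nCount m n k.toNat :=
  if_pos h

lemma F_of_neg {n m : ℕ} {k : ℤ} (h : k < 0) : F n m k = 0 :=
  if_neg (by omega)

/-- "Symmetric unimodal with center `N/2`, vanishing on negatives". -/
def SU (f : ℤ → ℕ) (N : ℤ) : Prop :=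
  (∀ k : ℤ, f (N - k) = f k) ∧
  (∀ i j : ℤ, i ≤ j → 2 * j ≤ N → f i ≤ f j) ∧
  (∀ k : ℤ, k < 0 → f k = 0)

lemma nRank_cons {m n : ℕ} (x : Fin (n + 1)) (q : Fin m → Fin (n + 1)) :
    nRank (Fin.cons x q) = (x : ℕ) + nRank q := by
  simp [nRank, Fin.sum_univ_succ]

lemma nRank_eq_cons {m n : ℕ} (c : Fin (m + 1) → Fin (n + 1)) :
    nRank c = (c 0 : ℕ) + nRank (Fin.tail c) := by
  simp [nRank, Fin.sum_univ_succ, Fin.tail]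

lemma nCount_succ (m n K : ℕ) :
    nCount (m + 1) n K =
      ∑ j ∈ Finset.range (n + 1), if j ≤ K then nCount m n (K - j) else 0 := by
  classical
  have h := Finset.card_eq_sum_card_fiberwise
    (s := Finset.univ.filter fun c : Fin (m + 1) → Fin (n + 1) => nRank c = K)
    (t := Finset.range (n + 1)) (f := fun c => ((c 0 : ℕ)))
    (by intro c _; simpa [Finset.mem_range] using (c 0).isLt)
  rw [nCount, h]
  clear h
  refine Finset.sum_congr rfl ?_
  intro j hj
  rw [Finset.mem_range] at hj
  by_cases hjK : j ≤ K
  · rw [if_pos hjK, nCount]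
    refine Finset.card_nbij' Fin.tail
      (Fin.cons (α := fun _ : Fin (m + 1) => Fin (n + 1)) ⟨j, hj⟩) ?_ ?_ ?_ ?_
    · intro c hc
      simp only [Finset.mem_coe, Finset.mem_filter, Finset.mem_univ, true_and] at hc ⊢
      obtain ⟨h1, h2⟩ := hc
      have h2' : ((c 0 : ℕ)) = j := h2
      rw [nRank_eq_cons c, h2'] at h1
      omega
    · intro q hq
      simp only [Finset.mem_coe, Finset.mem_filter, Finset.mem_univ, true_and] at hq ⊢
      refine ⟨?_, ?_⟩
      · rw [nRank_cons]
        simp only [hq]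
        omega
      · simp
    · intro c hc
      simp only [Finset.mem_coe, Finset.mem_filter, Finset.mem_univ, true_and] at hc
      have h2' : ((c 0 : ℕ)) = j := hc.2
      have h0 : c 0 = ⟨j, hj⟩ := by
        ext; exact h2'
      rw [← h0]
      exact Fin.cons_self_tail c
    · intro q _
      simp
  · rw [if_neg hjK, Finset.card_eq_zero]
    ext c
    simp only [Finset.mem_filter, Finset.mem_univ, true_and, Finset.notMem_empty,
      iff_false, not_and]
    intro h1 h2
    have h2' : ((c 0 : ℕ)) = j := h2
    clear h2
    rw [nRank_eq_cons c, h2'] at h1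
    omega

lemma F_succ (n m : ℕ) (k : ℤ) :
    F n (m + 1) k = ∑ j ∈ Finset.range (n + 1), F n m (k - j) := by
  by_cases hk : 0 ≤ k
  · rw [F_of_nonneg hk, nCount_succ]
    refine Finset.sum_congr rfl ?_
    intro j hj
    rw [Finset.mem_range] at hj
    by_cases hjk : (j : ℤ) ≤ k
    · rw [F_of_nonneg (by omega), if_pos (by omega)]
      congr 1
      omega
    · rw [F_of_neg (by omega), if_neg (by omega)]
  · rw [F_of_neg (by omega)]
    symm
    apply Finset.sum_eq_zero
    intro j _
    exact F_of_neg (by omega)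

lemma nCount_zero (n K : ℕ) : nCount 0 n K = if K = 0 then 1 else 0 := by
  classical
  rw [nCount]
  have hr : ∀ c : Fin 0 → Fin (n + 1), nRank c = 0 := by
    intro c; simp [nRank]
  by_cases h : K = 0
  · subst h
    rw [if_pos rfl, Finset.filter_true_of_mem (fun c _ => hr c), Finset.card_univ]
    simp
  · rw [if_neg h, Finset.card_eq_zero]
    ext c
    simp only [Finset.mem_filter, Finset.mem_univ, true_and, Finset.notMem_empty, iff_false]
    rw [hr c]
    omega

lemma SU_base (n : ℕ) : SU (F n 0) 0 := by
  have hF : ∀ k : ℤ, F n 0 k = if k = 0 then 1 else 0 := by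
    intro k
    by_cases hk : 0 ≤ k
    · rw [F_of_nonneg hk, nCount_zero]
      by_cases h : k = 0
      · simp [h]
      · rw [if_neg (by omega), if_neg h]
    · rw [F_of_neg (by omega), if_neg (by omega)]
  refine ⟨?_, ?_, ?_⟩
  · intro k
    rw [hF, hF]
    by_cases h : k = 0
    · simp [h]
    · rw [if_neg (by omega), if_neg h]
  · intro i j hij hj
    rw [hF, hF]
    by_cases h : i = 0
    · have : j = 0 := by omega
      simp [h, this]
    · simp [h]
  · intro k hk
    rw [hF, if_neg (by omega)]

lemma SU_step (f : ℤ → ℕ) (N : ℤ) (n : ℕ) (h : SU f N) :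
    SU (fun k => ∑ j ∈ Finset.range (n + 1), f (k - j)) (N + n) := by
  obtain ⟨hsym, hmono, hneg⟩ := h
  refine ⟨?_, ?_, ?_⟩
  · intro k
    show (∑ j ∈ Finset.range (n + 1), f (N + n - k - j)) =
      ∑ j ∈ Finset.range (n + 1), f (k - j)
    rw [← Finset.sum_range_reflect]
    refine Finset.sum_congr rfl ?_
    intro j hj
    rw [Finset.mem_range] at hj
    have he : (N : ℤ) + n - k - ((n + 1 - 1 - j : ℕ) : ℤ) = N - (k - j) := by
      have : ((n + 1 - 1 - j : ℕ) : ℤ) = (n : ℤ) - j := by omega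
      rw [this]; ring
    rw [he, hsym]
  · -- monotonicity: first prove single steps
    have step : ∀ k : ℤ, 2 * (k + 1) ≤ N + n →
        (∑ j ∈ Finset.range (n + 1), f (k - j)) ≤
        ∑ j ∈ Finset.range (n + 1), f (k + 1 - j) := by
      intro k hk
      have key : f (k - n) ≤ f (k + 1) := by
        by_cases hc : 2 * (k + 1) ≤ N
        · exact hmono _ _ (by omega) hc
        · rw [← hsym (k + 1)]
          exact hmono _ _ (by omega) (by omega)
      calc (∑ j ∈ Finset.range (n + 1), f (k - j))
          = (∑ j ∈ Finset.range n, f (k - j)) + f (k - n) := by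
            rw [Finset.sum_range_succ]
        _ ≤ (∑ j ∈ Finset.range n, f (k - j)) + f (k + 1) := by omega
        _ = ∑ j ∈ Finset.range (n + 1), f (k + 1 - j) := by
            rw [Finset.sum_range_succ']
            congr 1
            · refine Finset.sum_congr rfl ?_
              intro j _
              congr 1
              push_cast
              ring
            · congr 1
              push_cast
              ring
    intro i j hij hj
    exact Int.le_induction
      (motive := fun j _ => 2 * j ≤ N + n →
        (∑ l ∈ Finset.range (n + 1), f (i - l)) ≤ ∑ l ∈ Finset.range (n + 1), f (j - l))
      (fun _ => le_rfl)
      (fun j' _ ih h2 => le_trans (ih (by omega)) (step j' h2)) j hij hj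
  · intro k hk
    apply Finset.sum_eq_zero
    intro j _
    exact hneg _ (by omega)

lemma SU_F (n m : ℕ) : SU (F n m) (m * n) := by
  induction m with
  | zero => simpa using SU_base n
  | succ m ih =>
    have h := SU_step (F n m) (m * n) n ih
    have hfun : F n (m + 1) = fun k => ∑ j ∈ Finset.range (n + 1), F n m (k - j) :=
      funext (F_succ n m)
    have he : ((m : ℤ) + 1) * n = (m : ℤ) * n + n := by ring
    rw [hfun]
    push_cast
    rw [he]
    exact h

/-- The rank sizes of `N(m,n)` are symmetric (`N_k = N_{mn-k}`) and unimodal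
(`N_0 ≤ N_1 ≤ ⋯ ≤ N_{⌊mn/2⌋}`). -/
theorem stmt_8 (m n : ℕ) (hm : 0 < m) (hn : 0 < n) :
    (∀ k, k ≤ m * n → nCount m n k = nCount m n (m * n - k)) ∧
    (∀ k, k < m * n / 2 → nCount m n k ≤ nCount m n (k + 1)) := by
  obtain ⟨hsym, hmono, -⟩ := SU_F n m
  have hF : ∀ k : ℕ, nCount m n k = F n m k := by
    intro k
    rw [F_of_nonneg (by positivity), Int.toNat_natCast]
  constructor
  · intro k hk
    rw [hF, hF]
    have he : ((m * n - k : ℕ) : ℤ) = (m : ℤ) * n - k := by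
      rw [Nat.cast_sub hk]
      push_cast
      ring
    rw [he, hsym]
  · intro k hk
    rw [hF, hF]
    have h2 : 2 * ((k : ℤ) + 1) ≤ (m : ℤ) * n := by
      have : 2 * (k + 1) ≤ m * n := by omega
      exact_mod_cast this
    push_cast
    exact hmono _ _ (by omega) h2
end

section
/- For distinct α, β ∈ S_{m,n}, the chains C_α and C_β constructed by Algorithm 1 are disjoint: C_α ∩ C_β = ∅. -/
/-- Membership in `N(m,n)` for a `1`-indexed tuple `α : ℕ → ℕ` (entries
outside `{1,…,m}` are required to be `0`). -/
def memN (m n : ℕ) (α : ℕ → ℕ) : Prop :=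
  (∀ i, 1 ≤ i → i ≤ m → α i ≤ n) ∧ (∀ i, i = 0 ∨ m < i → α i = 0)

/-- Membership in `S_{m,n}`: `α ∈ N(m,n)`, `α_m = 0`, and
`Σ_{i=t}^{m-1} αᵢ ≤ Σ_{i=t+1}^{m} (n - αᵢ)` for all `1 ≤ t ≤ m-1`. -/
def memS (m n : ℕ) (α : ℕ → ℕ) : Prop :=
  memN m n α ∧ α m = 0 ∧
    ∀ t, 1 ≤ t → t ≤ m - 1 →
      ∑ i ∈ Finset.Icc t (m - 1), α i ≤ ∑ i ∈ Finset.Icc (t + 1) m, (n - α i)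

/-- `q 1 < q 2 < ⋯ < q s` is the sequence of splitting row indices of `α`:
`q 1 = 1`, `q s = m`, and `q (k+1) - 1` is the least `r ≥ q k` such that
`Σ_{i=q k}^{r} αᵢ ≤ Σ_{i=q k+1}^{r+1} (n - αᵢ)`. -/
def IsSplitSeq (m n : ℕ) (α : ℕ → ℕ) (s : ℕ) (q : ℕ → ℕ) : Prop :=
  1 ≤ s ∧ q 1 = 1 ∧ q s = m ∧
  (∀ k, 1 ≤ k → k < s → q k < q (k + 1)) ∧
  (∀ k, 1 ≤ k → k < s →
    (∑ i ∈ Finset.Icc (q k) (q (k + 1) - 1), α i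
        ≤ ∑ i ∈ Finset.Icc (q k + 1) (q (k + 1)), (n - α i)) ∧
    (∀ r, q k ≤ r → r < q (k + 1) - 1 →
      ¬ (∑ i ∈ Finset.Icc (q k) r, α i ≤ ∑ i ∈ Finset.Icc (q k + 1) (r + 1), (n - α i))))

/-- `αE` is the vector of forbidden-cell counts of `α` produced by
Algorithm 1, characterized via the splitting rows: `αᴱ_1 = 0`,
`αᴱ_j = n - α_j` for `q_k < j < q_{k+1}`, and
`αᴱ_{q_{k+1}} = Σ_{j=q_k}^{q_{k+1}-1} α_j - Σ_{j=q_k+1}^{q_{k+1}-1} αᴱ_j`. -/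
def IsForbidden (m n : ℕ) (α αE : ℕ → ℕ) : Prop :=
  (∀ i, i = 0 ∨ m < i → αE i = 0) ∧
  ∃ s q, IsSplitSeq m n α s q ∧ αE 1 = 0 ∧
    (∀ k, 1 ≤ k → k < s → ∀ j, q k < j → j < q (k + 1) → αE j = n - α j) ∧
    (∀ k, 1 ≤ k → k < s →
      αE (q (k + 1)) = (∑ j ∈ Finset.Icc (q k) (q (k + 1) - 1), α j)
        - ∑ j ∈ Finset.Icc (q k + 1) (q (k + 1) - 1), αE j)

/-- A fillable vector with respect to the quantities `dᵢ = n - αᵢ - αᵢᴱ`: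
there is `0 ≤ i₀ ≤ m` with `aᵢ = 0` for `i < i₀`, `0 < a_{i₀} < d_{i₀}`
(or `i₀ = 0`), and `a_j = d_j` for `j > i₀`. -/
def Fillable (m : ℕ) (d a : ℕ → ℕ) : Prop :=
  (∀ i, i = 0 ∨ m < i → a i = 0) ∧
  ∃ i₀, i₀ ≤ m ∧ (∀ i, 1 ≤ i → i < i₀ → a i = 0) ∧
    (i₀ = 0 ∨ (0 < a i₀ ∧ a i₀ < d i₀)) ∧
    (∀ j, i₀ < j → j ≤ m → a j = d j)

/-- Membership in the chain `C_α = {α + a : a fillable} ∪ {α}`. -/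
def memC (m n : ℕ) (α αE c : ℕ → ℕ) : Prop :=
  c = α ∨ ∃ a, Fillable m (fun i => n - α i - αE i) a ∧ ∀ i, c i = α i + a i

namespace ChainDisjoint

/-- Sum over the interval `(a, b]`. -/
def SS (f : ℕ → ℕ) (a b : ℕ) : ℕ := ∑ i ∈ Finset.Ioc a b, f i

lemma SS_empty (f : ℕ → ℕ) {a b : ℕ} (h : b ≤ a) : SS f a b = 0 := by
  unfold SS
  rw [Finset.Ioc_eq_empty (by omega), Finset.sum_empty]

lemma SS_split (f : ℕ → ℕ) {a b c : ℕ} (h1 : a ≤ b) (h2 : b ≤ c) :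
    SS f a c = SS f a b + SS f b c := (Finset.sum_Ioc_consecutive _ h1 h2).symm

lemma SS_top (f : ℕ → ℕ) {a b : ℕ} (h : a ≤ b) : SS f a (b+1) = SS f a b + f (b+1) :=
  Finset.sum_Ioc_succ_top h _

lemma SS_top' (f : ℕ → ℕ) {a b : ℕ} (h : a < b) : SS f a b = SS f a (b-1) + f b := by
  obtain ⟨c, rfl⟩ : ∃ c, b = c + 1 := ⟨b - 1, by omega⟩
  have e : c + 1 - 1 = c := rfl
  rw [e]
  exact SS_top f (by omega)

lemma SS_congr {f g : ℕ → ℕ} {a b : ℕ} (h : ∀ i, a < i → i ≤ b → f i = g i) :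
    SS f a b = SS g a b :=
  Finset.sum_congr rfl (fun i hi => by
    rw [Finset.mem_Ioc] at hi; exact h i hi.1 hi.2)

lemma SS_le {f g : ℕ → ℕ} {a b : ℕ} (h : ∀ i, a < i → i ≤ b → f i ≤ g i) :
    SS f a b ≤ SS g a b :=
  Finset.sum_le_sum (fun i hi => by
    rw [Finset.mem_Ioc] at hi; exact h i hi.1 hi.2)

lemma SS_lt {f g : ℕ → ℕ} {a b : ℕ} (i0 : ℕ) (hi1 : a < i0) (hi2 : i0 ≤ b)
    (hle : ∀ i, a < i → i ≤ b → f i ≤ g i) (hs : f i0 < g i0) :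
    SS f a b < SS g a b := by
  apply Finset.sum_lt_sum
  · intro i hi; rw [Finset.mem_Ioc] at hi; exact hle i hi.1 hi.2
  · exact ⟨i0, Finset.mem_Ioc.mpr ⟨hi1, hi2⟩, hs⟩

lemma Icc_sum_eq (f : ℕ → ℕ) {a : ℕ} (b : ℕ) (ha : 1 ≤ a) :
    ∑ i ∈ Finset.Icc a b, f i = SS f (a-1) b := by
  obtain ⟨c, rfl⟩ : ∃ c, a = c + 1 := ⟨a - 1, by omega⟩
  rw [Finset.Icc_add_one_left_eq_Ioc]
  rfl

/-- All the structural facts we need about a member of `S_{m,n}` together with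
its splitting sequence and forbidden vector. -/
structure Pack (m n : ℕ) (α αE : ℕ → ℕ) (s : ℕ) (q : ℕ → ℕ) : Prop where
  hαle : ∀ i, 1 ≤ i → i ≤ m → α i ≤ n
  hs1 : 1 ≤ s
  hq1 : q 1 = 1
  hqs : q s = m
  hmono : ∀ k, 1 ≤ k → k < s → q k < q (k + 1)
  hsucc : ∀ k, 1 ≤ k → k < s →
    SS α (q k - 1) (q (k+1) - 1) ≤ SS (fun i => n - α i) (q k) (q (k+1))
  hfail : ∀ k, 1 ≤ k → k < s → ∀ r, q k ≤ r → r < q (k+1) - 1 →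
    SS (fun i => n - α i) (q k) (r+1) < SS α (q k - 1) r
  hE1 : αE 1 = 0
  hEint : ∀ k, 1 ≤ k → k < s → ∀ j, q k < j → j < q (k + 1) → αE j = n - α j
  hEsplit : ∀ k, 1 ≤ k → k < s →
    αE (q (k + 1)) = SS α (q k - 1) (q (k+1) - 1) - SS αE (q k) (q (k+1) - 1)

namespace Pack

variable {m n s : ℕ} {α αE q : ℕ → ℕ}

lemma le_mono (P : Pack m n α αE s q) {k l : ℕ} (hk : 1 ≤ k) (hkl : k ≤ l) (hls : l ≤ s) :
    q k ≤ q l := by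
  induction l, hkl using Nat.le_induction with
  | base => exact le_rfl
  | succ l hl ih =>
      have h1 : q k ≤ q l := ih (by omega)
      have h2 : q l < q (l+1) := P.hmono l (by omega) (by omega)
      omega

lemma lt_mono (P : Pack m n α αE s q) {k l : ℕ} (hk : 1 ≤ k) (hkl : k < l) (hls : l ≤ s) :
    q k < q l := by
  have h1 : q k ≤ q (l-1) := P.le_mono hk (by omega) (by omega)
  have h2 : q (l-1) < q ((l-1)+1) := P.hmono (l-1) (by omega) (by omega)
  have e : (l-1)+1 = l := by omega
  rw [e] at h2
  omega

lemma q_pos (P : Pack m n α αE s q) {k : ℕ} (hk : 1 ≤ k) (hks : k ≤ s) : 1 ≤ q k := by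
  have := P.le_mono (le_refl 1) hk hks
  rw [P.hq1] at this
  omega

lemma q_le_m (P : Pack m n α αE s q) {k : ℕ} (hk : 1 ≤ k) (hks : k ≤ s) : q k ≤ m := by
  have := P.le_mono hk hks le_rfl
  rw [P.hqs] at this
  omega

lemma lt_of_q_lt (P : Pack m n α αE s q) {k l : ℕ} (hk : 1 ≤ k) (hks : k ≤ s)
    (hl : 1 ≤ l) (hls : l ≤ s) (h : q k < q l) : k < l := by
  by_contra h'
  push_neg at h'
  rcases eq_or_lt_of_le h' with he | hlt
  · subst he; omega
  · exact absurd (P.lt_mono hl hlt hks) (by omega)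

lemma cover (P : Pack m n α αE s q) {j : ℕ} (h2 : 2 ≤ j) (hjm : j ≤ m) :
    ∃ k, 1 ≤ k ∧ k < s ∧ q k < j ∧ j ≤ q (k + 1) := by
  have h1 : q 1 < j := by rw [P.hq1]; omega
  suffices H : ∀ d k, 1 ≤ k → k ≤ s → s - k = d → q k < j →
      ∃ k', 1 ≤ k' ∧ k' < s ∧ q k' < j ∧ j ≤ q (k'+1) from
    H (s-1) 1 le_rfl P.hs1 rfl h1
  intro d
  induction d with
  | zero =>
      intro k hk hks hd hq
      have : k = s := by omega
      subst this
      rw [P.hqs] at hq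
      omega
  | succ d ih =>
      intro k hk hks hd hq
      have hks' : k < s := by omega
      by_cases hj : j ≤ q (k+1)
      · exact ⟨k, hk, hks', hq, hj⟩
      · push_neg at hj
        exact ih (k+1) (by omega) (by omega) (by omega) hj

lemma Eint_sum (P : Pack m n α αE s q) {k : ℕ} (hk : 1 ≤ k) (hks : k < s) :
    SS αE (q k) (q (k+1) - 1) = SS (fun i => n - α i) (q k) (q (k+1) - 1) :=
  SS_congr (fun j hj1 hj2 => P.hEint k hk hks j hj1 (by omega))

lemma Esum_le (P : Pack m n α αE s q) {k : ℕ} (hk : 1 ≤ k) (hks : k < s) :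
    SS αE (q k) (q (k+1) - 1) ≤ SS α (q k - 1) (q (k+1) - 1) := by
  have hlt : q k < q (k+1) := P.hmono k hk hks
  rcases eq_or_lt_of_le (show q k + 1 ≤ q (k+1) by omega) with he | h2
  · rw [SS_empty αE (by omega)]
    omega
  · have hf := P.hfail k hk hks (q (k+1) - 2) (by omega) (by omega)
    have e1 : q (k+1) - 2 + 1 = q (k+1) - 1 := by omega
    rw [e1] at hf
    rw [P.Eint_sum hk hks]
    have h3 : SS α (q k - 1) (q (k+1) - 1)
        = SS α (q k - 1) (q (k+1) - 1 - 1) + α (q (k+1) - 1) :=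
      SS_top' α (by omega)
    have e2 : q (k+1) - 1 - 1 = q (k+1) - 2 := by omega
    rw [e2] at h3
    omega

lemma block (P : Pack m n α αE s q) {k : ℕ} (hk : 1 ≤ k) (hks : k < s) :
    SS αE (q k) (q (k+1)) = SS α (q k - 1) (q (k+1) - 1) := by
  have hlt : q k < q (k+1) := P.hmono k hk hks
  have h1 : SS αE (q k) (q (k+1)) = SS αE (q k) (q (k+1) - 1) + αE (q (k+1)) :=
    SS_top' αE hlt
  rw [h1, P.hEsplit k hk hks]
  have := P.Esum_le hk hks
  omega

lemma lemA (P : Pack m n α αE s q) (hm : 1 ≤ m) :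
    ∀ j, 1 ≤ j → j ≤ m → α j + αE j ≤ n := by
  intro j hj hjm
  rcases eq_or_lt_of_le hj with h1 | h2
  · subst h1
    rw [P.hE1]
    have := P.hαle 1 le_rfl hjm
    omega
  · obtain ⟨k, hk, hks, hkj, hjk⟩ := P.cover (by omega) hjm
    rcases eq_or_lt_of_le hjk with he | hlt
    · have hE := P.hEsplit k hk hks
      have hsu := P.hsucc k hk hks
      have hlt' : q k < q (k+1) := P.hmono k hk hks
      have hsp : SS (fun i => n - α i) (q k) (q (k+1))
          = SS (fun i => n - α i) (q k) (q (k+1) - 1) + (n - α (q (k+1))) := by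
        have h3 := SS_top' (fun i => n - α i) hlt'
        have e2 : q (k+1) - 1 = q (k+1) - 1 := rfl
        exact h3
      have hint := P.Eint_sum hk hks
      have hα := P.hαle j (by omega) hjm
      rw [he] at hα ⊢
      omega
    · rw [P.hEint k hk hks j hkj hlt]
      have := P.hαle j (by omega) hjm
      omega

lemma telescope (P : Pack m n α αE s q) {k l : ℕ} (hk : 1 ≤ k) (hkl : k ≤ l) (hls : l ≤ s) :
    SS αE (q k) (q l) = SS α (q k - 1) (q l - 1) := by
  induction l, hkl using Nat.le_induction with
  | base => rw [SS_empty _ le_rfl, SS_empty _ le_rfl]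
  | succ l hl ih =>
      have hls' : l < s := by omega
      have h1 : q k ≤ q l := P.le_mono hk hl (by omega)
      have h2 : q l ≤ q (l+1) := le_of_lt (P.hmono l (by omega) hls')
      rw [SS_split αE h1 h2,
        SS_split α (show q k - 1 ≤ q l - 1 by
          have := P.q_pos hk (by omega); omega) (show q l - 1 ≤ q (l+1) - 1 by omega),
        ih (by omega), P.block (by omega) hls']

end Pack

end ChainDisjoint

namespace ChainDisjoint

/-- Normal form of an element of the chain `C_α`. -/
def Rep (m n : ℕ) (α αE γ : ℕ → ℕ) : Prop :=
  ∃ u, u ≤ m ∧ (∀ i, 1 ≤ i → i < u → γ i = α i) ∧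
    (u = 0 ∨ (α u ≤ γ u ∧ (γ u = α u ∨ γ u + αE u < n))) ∧
    (∀ j, u < j → j ≤ m → γ j + αE j = n)

variable {m n s s' : ℕ} {α αE β βE q q' γ : ℕ → ℕ}

lemma rep_ge (P : Pack m n α αE s q) (hm : 1 ≤ m) (hR : Rep m n α αE γ) :
    ∀ j, 1 ≤ j → j ≤ m → α j ≤ γ j := by
  obtain ⟨u, hum, hlow, hmid, hhigh⟩ := hR
  intro j h1 h2
  rcases lt_trichotomy j u with h | h | h
  · rw [hlow j h1 h]
  · subst h
    rcases hmid with h0 | ⟨h, _⟩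
    · omega
    · exact h
  · have ha := hhigh j h h2
    have hb := P.lemA hm j h1 h2
    omega

lemma rep_le (P : Pack m n α αE s q) (hm : 1 ≤ m) (hR : Rep m n α αE γ) :
    ∀ j, 1 ≤ j → j ≤ m → γ j + αE j ≤ n := by
  obtain ⟨u, hum, hlow, hmid, hhigh⟩ := hR
  intro j h1 h2
  rcases lt_trichotomy j u with h | h | h
  · rw [hlow j h1 h]; exact P.lemA hm j h1 h2
  · subst h
    rcases hmid with h0 | ⟨hle, heq | hlt⟩
    · omega
    · rw [heq]; exact P.lemA hm j h1 h2
    · omega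
  · exact le_of_eq (hhigh j h h2)

lemma rep_interior (P : Pack m n α αE s q) (hm : 1 ≤ m) (hR : Rep m n α αE γ)
    {k j : ℕ} (hk : 1 ≤ k) (hks : k < s) (hj1 : q k < j) (hj2 : j < q (k+1)) :
    γ j = α j := by
  have hE : αE j = n - α j := P.hEint k hk hks j hj1 hj2
  have hjm : j ≤ m := by
    have := P.q_le_m (show 1 ≤ k+1 by omega) (show k+1 ≤ s by omega)
    omega
  have h1 : 1 ≤ j := by
    have := P.q_pos hk (le_of_lt hks)
    omega
  have hαn := P.hαle j h1 hjm
  obtain ⟨u, hum, hlow, hmid, hhigh⟩ := hR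
  rcases lt_trichotomy j u with h | h | h
  · exact hlow j h1 h
  · subst h
    rcases hmid with h0 | ⟨hle, heq | hlt⟩
    · omega
    · exact heq
    · rw [hE] at hlt; omega
  · have := hhigh j h hjm
    rw [hE] at this
    omega

lemma rep_high (P : Pack m n α αE s q) (hm : 1 ≤ m) (hR : Rep m n α αE γ)
    {p : ℕ} (h1 : 1 ≤ p) (h2 : p ≤ m) (hlt : α p < γ p) :
    γ p + αE p ≤ n ∧ ∀ j, p < j → j ≤ m → γ j + αE j = n := by
  obtain ⟨u, hum, hlow, hmid, hhigh⟩ := hR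
  have hup : u ≤ p := by
    by_contra h
    push_neg at h
    rw [hlow p h1 h] at hlt
    omega
  constructor
  · rcases eq_or_lt_of_le hup with he | hu
    · subst he
      rcases hmid with h0 | ⟨_, heq | hl⟩ <;> omega
    · exact le_of_eq (hhigh p hu h2)
  · exact fun j hj hjm => hhigh j (by omega) hjm

lemma rep_split_at (P : Pack m n α αE s q) (hm : 1 ≤ m) (hR : Rep m n α αE γ)
    {p : ℕ} (h1 : 1 ≤ p) (h2 : p < m) (hlt : α p < γ p) :
    ∃ k, 1 ≤ k ∧ k < s ∧ q k = p := by
  have hhp := (rep_high P hm hR h1 (le_of_lt h2) hlt).1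
  rcases eq_or_lt_of_le h1 with he | hp2
  · refine ⟨1, le_rfl, ?_, by rw [P.hq1, he]⟩
    have : q 1 < q s := by rw [P.hq1, P.hqs]; omega
    have := P.lt_of_q_lt le_rfl P.hs1 P.hs1 le_rfl this
    omega
  · obtain ⟨k, hk, hks, hkj, hjk⟩ := P.cover (by omega) (le_of_lt h2)
    rcases eq_or_lt_of_le hjk with he' | hlt'
    · refine ⟨k+1, by omega, ?_, he'.symm⟩
      have hv : q (k+1) < q s := by rw [P.hqs, ← he']; omega
      have := P.lt_of_q_lt (show 1 ≤ k+1 by omega) (by omega) P.hs1 le_rfl hv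
      omega
    · exfalso
      have hE : αE p = n - α p := P.hEint k hk hks p hkj hlt'
      have hαn := P.hαle p h1 (le_of_lt h2)
      rw [hE] at hhp
      omega

/-- comparison of consecutive splits of two tuples agreeing below `p`. -/
lemma next_eq (Pα : Pack m n α αE s q) (Pβ : Pack m n β βE s' q')
    {p k l : ℕ} (hagree : ∀ i, i < p → α i = β i)
    (hk : 1 ≤ k) (hks : k < s) (hl : 1 ≤ l) (hls : l < s')
    (hbase : q k = q' l) (hnp : q (k+1) < p) : q' (l+1) = q (k+1) := by
  have hm1 : q k < q (k+1) := Pα.hmono k hk hks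
  have hm2 : q' l < q' (l+1) := Pβ.hmono l hl hls
  have hq1 : 1 ≤ q k := Pα.q_pos hk (le_of_lt hks)
  rcases lt_trichotomy (q' (l+1)) (q (k+1)) with h | h | h
  · exfalso
    have hsβ := Pβ.hsucc l hl hls
    rw [← hbase] at hsβ
    have e1 : SS β (q k - 1) (q' (l+1) - 1) = SS α (q k - 1) (q' (l+1) - 1) :=
      SS_congr (fun i hi1 hi2 => (hagree i (by omega)).symm)
    have e2 : SS (fun i => n - β i) (q k) (q' (l+1)) = SS (fun i => n - α i) (q k) (q' (l+1)) :=
      SS_congr (fun i hi1 hi2 => by rw [hagree i (by omega)])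
    rw [e1, e2] at hsβ
    have hf := Pα.hfail k hk hks (q' (l+1) - 1) (by omega) (by omega)
    have e3 : q' (l+1) - 1 + 1 = q' (l+1) := by omega
    rw [e3] at hf
    omega
  · exact h
  · exfalso
    have hsα := Pα.hsucc k hk hks
    have hf := Pβ.hfail l hl hls (q (k+1) - 1) (by omega) (by omega)
    rw [← hbase] at hf
    have e3 : q (k+1) - 1 + 1 = q (k+1) := by omega
    rw [e3] at hf
    have e1 : SS β (q k - 1) (q (k+1) - 1) = SS α (q k - 1) (q (k+1) - 1) :=
      SS_congr (fun i hi1 hi2 => (hagree i (by omega)).symm)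
    have e2 : SS (fun i => n - β i) (q k) (q (k+1)) = SS (fun i => n - α i) (q k) (q (k+1)) :=
      SS_congr (fun i hi1 hi2 => by rw [hagree i (by omega)])
    rw [e1, e2] at hf
    omega

/-- splits below the first disagreement transfer from `α` to `β`. -/
lemma split_imp (Pα : Pack m n α αE s q) (Pβ : Pack m n β βE s' q')
    {p : ℕ} (hagree : ∀ i, i < p → α i = β i) (hpm : p ≤ m) :
    ∀ j, j < p → (∃ k, 1 ≤ k ∧ k ≤ s ∧ q k = j) → (∃ l, 1 ≤ l ∧ l ≤ s' ∧ q' l = j) := by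
  intro j
  induction j using Nat.strong_induction_on with
  | _ j ih =>
    rintro hjp ⟨k0, hk0, hk0s, hqk0⟩
    have hj1 : 1 ≤ j := by
      have := Pα.q_pos hk0 hk0s
      omega
    rcases eq_or_lt_of_le hj1 with h1 | h2
    · exact ⟨1, le_rfl, Pβ.hs1, by rw [Pβ.hq1, h1]⟩
    · have hk02 : 2 ≤ k0 := by
        by_contra h
        have hx : k0 = 1 := by omega
        rw [hx, Pα.hq1] at hqk0
        omega
      have hk : 1 ≤ k0 - 1 := by omega
      have hks : k0 - 1 < s := by omega
      have hq_eq : q (k0 - 1 + 1) = j := by rw [show k0 - 1 + 1 = k0 by omega, hqk0]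
      have hqk_lt : q (k0-1) < j := by
        rw [← hq_eq]; exact Pα.hmono (k0-1) hk hks
      obtain ⟨l, hl, hls, hql⟩ := ih (q (k0-1)) (by omega) (by omega) ⟨k0-1, hk, by omega, rfl⟩
      have hls' : l < s' := by
        rcases eq_or_lt_of_le hls with hx | hx
        · exfalso
          rw [hx, Pβ.hqs] at hql
          omega
        · exact hx
      have hnext := next_eq Pα Pβ hagree hk hks hl hls' (by rw [hql]) (by rw [hq_eq]; omega)
      exact ⟨l+1, by omega, by omega, by rw [hnext, hq_eq]⟩

end ChainDisjoint

namespace ChainDisjoint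

variable {m n s s' : ℕ} {α αE β βE q q' γ : ℕ → ℕ}

/-- Key estimate: for a split `p` of `α` and any `p < Q ≤ m`,
the sum of `αE` over `(p, Q]` is at most the sum of `α` over `[p, Q)`. -/
lemma Esum_le_alpha (Pα : Pack m n α αE s q) {p kp Q : ℕ}
    (hkp : 1 ≤ kp) (hkps : kp < s) (hqkp : q kp = p)
    (hpQ : p < Q) (hQm : Q ≤ m) :
    SS αE p Q ≤ SS α (p-1) (Q-1) := by
  have hp1 : 1 ≤ p := by rw [← hqkp]; exact Pα.q_pos hkp (le_of_lt hkps)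
  have hQ2 : 2 ≤ Q := by omega
  obtain ⟨k', hk', hk's, hq1', hq2'⟩ := Pα.cover hQ2 hQm
  have hpk' : p ≤ q k' := by
    by_contra h
    push_neg at h
    have hlt : k' < kp := Pα.lt_of_q_lt hk' (le_of_lt hk's) hkp (le_of_lt hkps)
      (by rw [hqkp]; exact h)
    have : q (k'+1) ≤ q kp := Pα.le_mono (by omega) (by omega) (le_of_lt hkps)
    omega
  rcases eq_or_lt_of_le hq2' with he | hlt
  · -- Q = q (k'+1) : telescope from kp to k'+1
    have hkpk : kp ≤ k' + 1 := by
      have hv : q kp < q (k'+1) := by rw [hqkp, ← he]; exact hpQ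
      have := Pα.lt_of_q_lt hkp (le_of_lt hkps) (by omega) (by omega) hv
      omega
    have ht := Pα.telescope hkp hkpk (by omega)
    rw [hqkp, ← he] at ht
    omega
  · -- q k' < Q < q (k'+1)
    have hkpk : kp ≤ k' := by
      by_contra h
      push_neg at h
      have : q (k'+1) ≤ q kp := Pα.le_mono (by omega) (by omega) (le_of_lt hkps)
      rw [hqkp] at this
      omega
    have ht := Pα.telescope hkp hkpk (le_of_lt hk's)
    rw [hqkp] at ht
    have hsplit1 : SS αE p Q = SS αE p (q k') + SS αE (q k') Q :=
      SS_split _ hpk' (by omega)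
    have hint : SS αE (q k') Q = SS (fun i => n - α i) (q k') Q :=
      SS_congr (fun i h1 h2' => Pα.hEint k' hk' hk's i h1 (by omega))
    have hf := Pα.hfail k' hk' hk's (Q - 1) (by omega) (by omega)
    have e3 : Q - 1 + 1 = Q := by omega
    rw [e3] at hf
    have hq'1 : 1 ≤ q k' := Pα.q_pos hk' (le_of_lt hk's)
    have hsplit2 : SS α (p-1) (Q-1) = SS α (p-1) (q k' - 1) + SS α (q k' - 1) (Q-1) :=
      SS_split _ (by omega) (by omega)
    omega

/-- Master contradiction: `p` is a split of both `α` and `β`, all of `(p,m]`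
is "full" for `α` in `γ`, and `α p < β p`. -/
lemma master (Pα : Pack m n α αE s q) (Pβ : Pack m n β βE s' q')
    (hm : 1 ≤ m) (hRα : Rep m n α αE γ) (hRβ : Rep m n β βE γ)
    {p kp l : ℕ} (hkp : 1 ≤ kp) (hkps : kp < s) (hqkp : q kp = p)
    (hl : 1 ≤ l) (hls : l < s') (hql : q' l = p)
    (h2 : ∀ j, p < j → j ≤ m → γ j + αE j = n)
    (hαβp : α p < β p) : False := by
  have hpQ : p < q' (l+1) := by rw [← hql]; exact Pβ.hmono l hl hls
  have hQm : q' (l+1) ≤ m := Pβ.q_le_m (by omega) (by omega)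
  have hp1 : 1 ≤ p := by rw [← hql]; exact Pβ.q_pos hl (le_of_lt hls)
  have hblockβ : SS βE p (q' (l+1)) = SS β (p - 1) (q' (l+1) - 1) := by
    have := Pβ.block hl hls
    rwa [hql] at this
  have hup : SS βE p (q' (l+1)) ≤ SS αE p (q' (l+1)) := by
    calc SS βE p (q' (l+1)) ≤ SS (fun i => n - γ i) p (q' (l+1)) :=
          SS_le (fun i h1' h2' => by
            have := rep_le Pβ hm hRβ i (by omega) (by omega)
            omega)
      _ = SS αE p (q' (l+1)) :=
          SS_congr (fun i h1' h2' => by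
            have := h2 i h1' (by omega)
            omega)
  have hlow : SS α (p-1) (q' (l+1) - 1) < SS β (p-1) (q' (l+1) - 1) := by
    apply SS_lt p (by omega) (by omega)
    · intro i h1i h2i
      rcases eq_or_lt_of_le (show p ≤ i by omega) with he | hlt
    -- i = p
      · rw [← he]; omega
      · have hint : γ i = β i := rep_interior Pβ hm hRβ hl hls (by omega) (by omega)
        have hge : α i ≤ γ i := rep_ge Pα hm hRα i (by omega) (by omega)
        omega
    · exact hαβp
  have hEα := Esum_le_alpha Pα hkp hkps hqkp hpQ hQm
  omega

/-- The remaining case: `p` is a split of `α` but interior for `β`,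
and `γ p = β p`. -/
lemma subcase2 (Pα : Pack m n α αE s q) (Pβ : Pack m n β βE s' q')
    (hm : 1 ≤ m) (hRα : Rep m n α αE γ) (hRβ : Rep m n β βE γ)
    {p kp : ℕ} (hkp : 1 ≤ kp) (hkps : kp < s) (hqkp : q kp = p)
    (hagree : ∀ i, i < p → α i = β i)
    (hnosplit : ∀ l, 1 ≤ l → l ≤ s' → q' l ≠ p)
    (hγp : γ p = β p)
    (h2 : ∀ j, p < j → j ≤ m → γ j + αE j = n)
    (hp1 : 1 ≤ p) (hpm : p < m)
    (hαβp : α p < β p) : False := by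
  have hp2 : 2 ≤ p := by
    by_contra h
    exact hnosplit 1 le_rfl Pβ.hs1 (by rw [Pβ.hq1]; omega)
  obtain ⟨l, hl, hls, hql_lt, hple⟩ := Pβ.cover hp2 (le_of_lt hpm)
  have hpQ : p < q' (l+1) :=
    lt_of_le_of_ne hple (fun h => hnosplit (l+1) (by omega) (by omega) h.symm)
  -- kp ≥ 2 and the α-split preceding p is q' l
  have hkp2 : 2 ≤ kp := by
    by_contra h
    have hx : kp = 1 := by omega
    rw [hx, Pα.hq1] at hqkp
    omega
  have hkh1 : 1 ≤ kp - 1 := by omega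
  have hkhs : kp - 1 < s := by omega
  have hkh_succ : kp - 1 + 1 = kp := by omega
  have hqkh_lt : q (kp-1) < p := by
    have := Pα.hmono (kp-1) hkh1 hkhs
    rw [hkh_succ, hqkp] at this
    exact this
  obtain ⟨l2, hl2, hl2s, hql2⟩ := split_imp Pα Pβ hagree (le_of_lt hpm) (q (kp-1))
    hqkh_lt ⟨kp-1, hkh1, by omega, rfl⟩
  obtain ⟨k2, hk2, hk2s, hqk2⟩ := split_imp Pβ Pα (fun i h => (hagree i h).symm)
    (le_of_lt hpm) (q' l) hql_lt ⟨l, hl, by omega, rfl⟩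
  have hqh_eq : q (kp-1) = q' l := by
    rcases lt_trichotomy (q (kp-1)) (q' l) with h | h | h
    · exfalso
      have ha : kp - 1 < k2 := Pα.lt_of_q_lt hkh1 (by omega) hk2 hk2s
        (by rw [hqk2]; exact h)
      have hb : k2 < kp := Pα.lt_of_q_lt hk2 hk2s hkp (le_of_lt hkps)
        (by rw [hqk2, ← hqkp] at *; exact hql_lt)
      omega
    · exact h
    · exfalso
      have ha : l < l2 := Pβ.lt_of_q_lt hl (by omega) hl2 hl2s (by rw [hql2]; exact h)
      have hb : l2 < l + 1 := Pβ.lt_of_q_lt hl2 hl2s (by omega) (by omega)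
        (by rw [hql2]; omega)
      omega
  have hqh1 : 1 ≤ q' l := Pβ.q_pos hl (le_of_lt hls)
  have hQm : q' (l+1) ≤ m := Pβ.q_le_m (by omega) (by omega)
  -- β's strict failure at r = p - 1
  have hbf := Pβ.hfail l hl hls (p-1) (by omega) (by omega)
  have e1 : p - 1 + 1 = p := by omega
  rw [e1] at hbf
  have hsp1 : SS (fun i => n - β i) (q' l) p
      = SS (fun i => n - β i) (q' l) (p-1) + (n - β p) :=
    SS_top' _ hql_lt
  have hc1 : SS (fun i => n - β i) (q' l) (p-1) = SS (fun i => n - α i) (q' l) (p-1) :=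
    SS_congr (fun i h1 h2' => by rw [hagree i (by omega)])
  have hc2 : SS β (q' l - 1) (p-1) = SS α (q' l - 1) (p-1) :=
    SS_congr (fun i h1 h2' => (hagree i (by omega)).symm)
  -- β's block relation and the ceiling bound
  have hblockβ : SS βE (q' l) (q' (l+1)) = SS β (q' l - 1) (q' (l+1) - 1) := Pβ.block hl hls
  have hupβ : SS βE (q' l) (q' (l+1)) ≤ SS (fun i => n - γ i) (q' l) (q' (l+1)) :=
    SS_le (fun i h1 h2' => by
      have := rep_le Pβ hm hRβ i (by omega) (by omega)
      omega)
  -- decompose the ceiling sum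
  have hd1 : SS (fun i => n - γ i) (q' l) (q' (l+1))
      = SS (fun i => n - γ i) (q' l) (p-1) + SS (fun i => n - γ i) (p-1) (q' (l+1)) :=
    SS_split _ (by omega) (by omega)
  have hd2 : SS (fun i => n - γ i) (p-1) (q' (l+1))
      = (n - γ p) + SS (fun i => n - γ i) p (q' (l+1)) := by
    rw [SS_split _ (show p - 1 ≤ p by omega) (le_of_lt hpQ)]
    have : SS (fun i => n - γ i) (p-1) p = (n - γ p) := by
      rw [SS_top' _ (show p-1 < p by omega), SS_empty _ (by omega), Nat.zero_add]
    rw [this]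
  have hc3 : SS (fun i => n - γ i) (q' l) (p-1) = SS (fun i => n - α i) (q' l) (p-1) :=
    SS_congr (fun i h1 h2' => by
      have hint : γ i = α i := by
        refine rep_interior Pα hm hRα hkh1 hkhs ?_ ?_
        · rw [hqh_eq]; exact h1
        · rw [hkh_succ, hqkp]; omega
      rw [hint])
  have hc4 : SS (fun i => n - γ i) p (q' (l+1)) = SS αE p (q' (l+1)) :=
    SS_congr (fun i h1 h2' => by
      have := h2 i h1 (by omega)
      omega)
  -- decompose β's block sum
  have hd3 : SS β (q' l - 1) (q' (l+1) - 1)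
      = SS β (q' l - 1) (p-1) + SS β (p-1) (q' (l+1) - 1) :=
    SS_split _ (by omega) (by omega)
  have hd4 : SS β (p-1) (q' (l+1) - 1) = β p + SS β p (q' (l+1) - 1) := by
    rw [SS_split _ (show p - 1 ≤ p by omega) (by omega)]
    have : SS β (p-1) p = β p := by
      rw [SS_top' _ (show p-1 < p by omega), SS_empty _ (by omega), Nat.zero_add]
    rw [this]
  -- on (p, Q-1] : β = γ ≥ α
  have hc5 : SS α p (q' (l+1) - 1) ≤ SS β p (q' (l+1) - 1) := by
    apply SS_le
    intro i h1 h2'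
    have hint : γ i = β i := rep_interior Pβ hm hRβ hl hls (by omega) (by omega)
    have hge : α i ≤ γ i := rep_ge Pα hm hRα i (by omega) (by omega)
    omega
  -- now the α-side estimate
  have hEα := Esum_le_alpha Pα hkp hkps hqkp hpQ hQm
  have hd5 : SS α (p-1) (q' (l+1) - 1) = α p + SS α p (q' (l+1) - 1) := by
    rw [SS_split _ (show p - 1 ≤ p by omega) (by omega)]
    have : SS α (p-1) p = α p := by
      rw [SS_top' _ (show p-1 < p by omega), SS_empty _ (by omega), Nat.zero_add]
    rw [this]
  -- βp ≤ n since needed for the subtraction bookkeeping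
  have hβn : β p ≤ n := by
    have := Pβ.hαle p hp1 (le_of_lt hpm)
    exact this
  have hγβ : γ p = β p := hγp
  omega

end ChainDisjoint

namespace ChainDisjoint

variable {m n s s' : ℕ} {α αE β βE q q' γ : ℕ → ℕ}

lemma main_ne (Pα : Pack m n α αE s q) (Pβ : Pack m n β βE s' q')
    (hm : 1 ≤ m) (hRα : Rep m n α αE γ) (hRβ : Rep m n β βE γ)
    {p : ℕ} (hp1 : 1 ≤ p) (hpm : p < m) (hagree : ∀ i, i < p → α i = β i)
    (hαβp : α p < β p) : False := by
  have hγp : β p ≤ γ p := rep_ge Pβ hm hRβ p hp1 (le_of_lt hpm)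
  have hαγ : α p < γ p := by omega
  obtain ⟨kp, hkp, hkps, hqkp⟩ := rep_split_at Pα hm hRα hp1 hpm hαγ
  have h2 := (rep_high Pα hm hRα hp1 (le_of_lt hpm) hαγ).2
  by_cases hsp : ∃ l, 1 ≤ l ∧ l < s' ∧ q' l = p
  · obtain ⟨l, hl, hls, hql⟩ := hsp
    exact master Pα Pβ hm hRα hRβ hkp hkps hqkp hl hls hql h2 hαβp
  · have hnosplit : ∀ l, 1 ≤ l → l ≤ s' → q' l ≠ p := by
      intro l h1 h2' he
      rcases eq_or_lt_of_le h2' with h3 | h3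
      · rw [h3, Pβ.hqs] at he
        omega
      · exact hsp ⟨l, h1, h3, he⟩
    have hγpe : γ p = β p := by
      by_contra hne
      have hx : β p < γ p := by omega
      obtain ⟨l, h1, h2', h3⟩ := rep_split_at Pβ hm hRβ hp1 hpm hx
      exact hnosplit l h1 (le_of_lt h2') h3
    exact subcase2 Pα Pβ hm hRα hRβ hkp hkps hqkp hagree hnosplit hγpe h2 hp1 hpm hαβp

end ChainDisjoint

namespace ChainDisjoint

variable {m n s : ℕ} {α αE q γ : ℕ → ℕ}

lemma rep_of_memC (P : Pack m n α αE s q) (hm : 1 ≤ m) {c : ℕ → ℕ}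
    (h : memC m n α αE c) : Rep m n α αE c := by
  rcases h with rfl | ⟨a, ⟨hout, i₀, hi₀, hlow, hmid, hhigh⟩, hsum⟩
  · exact ⟨m, le_rfl, fun i _ _ => rfl, Or.inr ⟨le_rfl, Or.inl rfl⟩,
      fun j h1 h2 => absurd h1 (by omega)⟩
  · refine ⟨i₀, hi₀, ?_, ?_, ?_⟩
    · intro i h1 h2
      rw [hsum i, hlow i h1 h2, add_zero]
    · rcases hmid with h0 | ⟨hpos, hlt⟩
      · exact Or.inl h0
      · have h1i : 1 ≤ i₀ := by
          rcases Nat.eq_zero_or_pos i₀ with h0 | h0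
          · rw [hout i₀ (Or.inl h0)] at hpos
            omega
          · omega
        have hA : α i₀ + αE i₀ ≤ n := P.lemA hm i₀ h1i hi₀
        have hlt' : a i₀ < n - α i₀ - αE i₀ := hlt
        refine Or.inr ⟨by rw [hsum i₀]; omega, Or.inr ?_⟩
        rw [hsum i₀]
        omega
    · intro j h1 h2
      have he : a j = n - α j - αE j := hhigh j h1 h2
      have hA : α j + αE j ≤ n := P.lemA hm j (by omega) h2
      rw [hsum j, he]
      omega

lemma q_pos_aux {s : ℕ} {q : ℕ → ℕ} (hq1 : q 1 = 1)
    (hmono : ∀ k, 1 ≤ k → k < s → q k < q (k + 1)) :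
    ∀ k, 1 ≤ k → k ≤ s → 1 ≤ q k := by
  intro k hk hks
  induction k with
  | zero => omega
  | succ k ih =>
      rcases Nat.eq_zero_or_pos k with h0 | h0
      · rw [h0] at *
        rw [hq1]
      · have h1 := ih (by omega) (by omega)
        have h2 := hmono k (by omega) (by omega)
        omega

lemma mkPack {m n : ℕ} {α αE : ℕ → ℕ} (hα : memS m n α) (hαE : IsForbidden m n α αE) :
    ∃ s q, Pack m n α αE s q := by
  obtain ⟨hN, hαm0, hSin⟩ := hα
  obtain ⟨hαout, s, q, ⟨hs1, hq1, hqs, hmono, hblocks⟩, hE1, hEint, hEsplit⟩ := hαE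
  have hqpos : ∀ k, 1 ≤ k → k ≤ s → 1 ≤ q k := q_pos_aux hq1 hmono
  refine ⟨s, q, ?_⟩
  refine { hαle := hN.1, hs1 := hs1, hq1 := hq1, hqs := hqs, hmono := hmono,
           hE1 := hE1, hEint := hEint, hsucc := ?_, hfail := ?_, hEsplit := ?_ }
  · intro k hk hks
    have h := (hblocks k hk hks).1
    have h1 : 1 ≤ q k := hqpos k hk (le_of_lt hks)
    rw [Icc_sum_eq α _ h1, Icc_sum_eq (fun i => n - α i) _ (by omega)] at h
    simpa using h
  · intro k hk hks r hr1 hr2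
    have h := (hblocks k hk hks).2 r hr1 hr2
    have h1 : 1 ≤ q k := hqpos k hk (le_of_lt hks)
    rw [Icc_sum_eq α _ h1, Icc_sum_eq (fun i => n - α i) _ (by omega)] at h
    simp only [Nat.add_sub_cancel] at h
    omega
  · intro k hk hks
    have h := hEsplit k hk hks
    have h1 : 1 ≤ q k := hqpos k hk (le_of_lt hks)
    rw [Icc_sum_eq α _ h1, Icc_sum_eq αE _ (by omega)] at h
    simpa using h

end ChainDisjoint

/-- For distinct `α, β ∈ S_{m,n}`, the chains `C_α` and `C_β` are disjoint. -/
theorem stmt_13 (m n : ℕ) (hm : 0 < m) (hn : 0 < n) (α β αE βE : ℕ → ℕ)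
    (hαβ : α ≠ β) (hα : memS m n α) (hβ : memS m n β)
    (hαE : IsForbidden m n α αE) (hβE : IsForbidden m n β βE) :
    ∀ c : ℕ → ℕ, memC m n α αE c → memC m n β βE c → False := by
  intro c hcα hcβ
  classical
  have hm1 : 1 ≤ m := hm
  obtain ⟨s, q, Pα⟩ := ChainDisjoint.mkPack hα hαE
  obtain ⟨s', q', Pβ⟩ := ChainDisjoint.mkPack hβ hβE
  have hRα := ChainDisjoint.rep_of_memC Pα hm1 hcα
  have hRβ := ChainDisjoint.rep_of_memC Pβ hm1 hcβ
  have hne : ∃ i, α i ≠ β i := by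
    by_contra h
    push_neg at h
    exact hαβ (funext h)
  set p := Nat.find hne with hpdef
  have hp : α p ≠ β p := Nat.find_spec hne
  have hmin : ∀ i, i < p → α i = β i := fun i hi => not_not.mp (Nat.find_min hne hi)
  have hp1 : 1 ≤ p := by
    rcases Nat.eq_zero_or_pos p with h0 | h0
    · exfalso
      apply hp
      rw [h0, hα.1.2 0 (Or.inl rfl), hβ.1.2 0 (Or.inl rfl)]
    · omega
  have hpm : p < m := by
    rcases lt_trichotomy p m with h | h | h
    · exact h
    · exfalso
      apply hp
      rw [h, hα.2.1, hβ.2.1]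
    · exfalso
      apply hp
      rw [hα.1.2 p (Or.inr h), hβ.1.2 p (Or.inr h)]
  rcases lt_trichotomy (α p) (β p) with h | h | h
  · exact ChainDisjoint.main_ne Pα Pβ hm1 hRα hRβ hp1 hpm hmin h
  · exact hp h
  · exact ChainDisjoint.main_ne Pβ Pα hm1 hRβ hRα hp1 hpm
      (fun i hi => (hmin i hi).symm) h
end

section
/- The map ψ : S_{m,n} → S_{m,n} defined by ψ(α) = (α_mᴱ, α_{m−1}ᴱ, …, α₂ᴱ, 0), where αᴱ is the forbidden-cell vector of Algorithm 1, is a well-defined involution on S_{m,n}: ψ(α) ∈ S_{m,n} and ψ(ψ(α)) = α for all α ∈ S_{m,n}. -/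
/-- The reversal `ψ(α) = (αᴱ_m, αᴱ_{m-1}, …, αᴱ_2, 0)` of the forbidden-cell
vector, as a `1`-indexed tuple. -/
def psiRev (m : ℕ) (f : ℕ → ℕ) : ℕ → ℕ :=
  fun i => if 1 ≤ i ∧ i ≤ m then f (m + 1 - i) else 0



lemma sum_reflect (m : ℕ) (f : ℕ → ℕ) (t u : ℕ) (ht : 1 ≤ t) (hu : u ≤ m) :
    ∑ i ∈ Finset.Icc t u, f (m + 1 - i) = ∑ j ∈ Finset.Icc (m + 1 - u) (m + 1 - t), f j := by
  refine Finset.sum_nbij' (fun i => m + 1 - i) (fun j => m + 1 - j) ?_ ?_ ?_ ?_ ?_ <;>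
    (intro a ha; simp only [Finset.mem_Icc] at *) <;> omega

lemma sum_Icc_glue (f : ℕ → ℕ) (a b c : ℕ) (h1 : a ≤ b + 1) (h2 : b ≤ c) :
    ∑ i ∈ Finset.Icc a b, f i + ∑ i ∈ Finset.Icc (b+1) c, f i = ∑ i ∈ Finset.Icc a c, f i := by
  rw [← Finset.sum_union]
  · congr 1; ext x; simp only [Finset.mem_union, Finset.mem_Icc]; omega
  · simp only [Finset.disjoint_left, Finset.mem_Icc]; omega

lemma splitSeq_mono {m n α s q} (h : IsSplitSeq m n α s q) :
    ∀ l, l ≤ s → ∀ k, 1 ≤ k → k ≤ l → q k ≤ q l ∧ (k < l → q k < q l) := by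
  obtain ⟨hs, h1, hm, hlt, _⟩ := h
  intro l
  induction l with
  | zero => intro _ k hk hkl; omega
  | succ l ih =>
    intro hls k hk hkl
    rcases Nat.lt_or_ge k (l+1) with hlt' | hge
    · have hk_le_l : k ≤ l := by omega
      have h1l : 1 ≤ l := by omega
      have := ih (by omega) k hk hk_le_l
      have hql : q l < q (l+1) := hlt l h1l (by omega)
      constructor <;> omega
    · have : k = l + 1 := by omega
      subst this; exact ⟨le_refl _, by omega⟩

lemma splitSeq_range {m n α s q} (h : IsSplitSeq m n α s q) :
    ∀ k, 1 ≤ k → k ≤ s → 1 ≤ q k ∧ q k ≤ m := by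
  intro k hk hks
  have h1 := splitSeq_mono h k hks 1 le_rfl hk
  have h2 := splitSeq_mono h s le_rfl k hk hks
  obtain ⟨hs, h1', hm', _, _⟩ := h
  omega

lemma splitSeq_cover {m n α s q} (h : IsSplitSeq m n α s q) :
    ∀ j, 1 < j → j ≤ m → ∃ k, 1 ≤ k ∧ k < s ∧ q k < j ∧ j ≤ q (k + 1) := by
  obtain ⟨hs, h1, hm, hlt, _⟩ := h
  have key : ∀ l, 1 ≤ l → l ≤ s → ∀ j, 1 < j → j ≤ q l →
      ∃ k, 1 ≤ k ∧ k < s ∧ q k < j ∧ j ≤ q (k + 1) := by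
    intro l
    induction l with
    | zero => omega
    | succ l ih =>
      intro _ hls j hj hjq
      rcases Nat.eq_zero_or_pos l with h0 | hpos
      · subst h0
        rw [show (0:ℕ)+1 = 1 from rfl, h1] at hjq; omega
      · rcases le_or_gt j (q l) with hle | hgt
        · exact ih hpos (by omega) j hj hle
        · exact ⟨l, hpos, by omega, hgt, hjq⟩
  intro j hj hjm
  exact key s (by omega) le_rfl j hj (by omega)

lemma splitSeq_unique {m n : ℕ} {α : ℕ → ℕ} {s q s' q'}
    (h : IsSplitSeq m n α s q) (h' : IsSplitSeq m n α s' q') :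
    s = s' ∧ ∀ k, 1 ≤ k → k ≤ s → q k = q' k := by
  have hagree : ∀ k, 1 ≤ k → k ≤ s → k ≤ s' → q k = q' k := by
    intro k
    induction k with
    | zero => omega
    | succ k ih =>
      intro _ hks hks'
      rcases Nat.eq_zero_or_pos k with h0 | hpos
      · subst h0; rw [h.2.1, h'.2.1]
      · have heq : q k = q' k := ih hpos (by omega) (by omega)
        have hle1 := (h.2.2.2.2 k hpos (by omega))
        have hle2 := (h'.2.2.2.2 k hpos (by omega))
        have hq1 := h.2.2.2.1 k hpos (by omega)
        have hq2 := h'.2.2.2.1 k hpos (by omega)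
        -- both q (k+1) - 1 and q' (k+1) - 1 are the least good r ≥ q k
        have hq1pos : 1 ≤ q k := (splitSeq_range h k hpos (by omega)).1
        have e1 : q (k+1) - 1 + 1 = q (k+1) := by omega
        have hq2pos : 1 ≤ q' k := (splitSeq_range h' k hpos (by omega)).1
        have e2 : q' (k+1) - 1 + 1 = q' (k+1) := by omega
        rcases Nat.lt_trichotomy (q (k+1)) (q' (k+1)) with hlt | heq2 | hgt
        · exfalso
          refine hle2.2 (q (k+1) - 1) (by omega) (by omega) ?_
          rw [← heq, e1]; exact hle1.1
        · omega
        · exfalso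
          refine hle1.2 (q' (k+1) - 1) (by omega) (by omega) ?_
          rw [heq, e2]; exact hle2.1
  have hss : s = s' := by
    by_contra hne
    rcases Nat.lt_or_ge s s' with hlt | hge
    · have h1 : q s = q' s := hagree s h.1 le_rfl (by omega)
      have h2 := splitSeq_mono h' s' le_rfl (s+1) (by omega) (by omega)
      have h3 := h'.2.2.2.1 s h.1 hlt
      have := h.2.2.1; have := h'.2.2.1
      omega
    · have hlt : s' < s := by omega
      have h1 : q s' = q' s' := hagree s' h'.1 (by omega) le_rfl
      have h2 := splitSeq_mono h s le_rfl (s'+1) (by omega) (by omega)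
      have h3 := h.2.2.2.1 s' h'.1 hlt
      have := h.2.2.1; have := h'.2.2.1
      omega
  exact ⟨hss, fun k hk hks => hagree k hk hks (by omega)⟩

lemma blockFacts {m n : ℕ} {α αE : ℕ → ℕ} {s : ℕ} {q : ℕ → ℕ}
    (hsq : IsSplitSeq m n α s q)
    (hN : ∀ i, 1 ≤ i → i ≤ m → α i ≤ n)
    (hint : ∀ k, 1 ≤ k → k < s → ∀ j, q k < j → j < q (k+1) → αE j = n - α j)
    (hval : ∀ k, 1 ≤ k → k < s → αE (q (k+1)) =
      (∑ j ∈ Finset.Icc (q k) (q (k+1) - 1), α j)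
        - ∑ j ∈ Finset.Icc (q k + 1) (q (k+1) - 1), αE j)
    (k : ℕ) (hk : 1 ≤ k) (hks : k < s) :
    (∑ i ∈ Finset.Icc (q k + 1) (q (k+1)), αE i
      = ∑ i ∈ Finset.Icc (q k) (q (k+1) - 1), α i)
    ∧ α (q (k+1)) + αE (q (k+1)) ≤ n := by
  have hPQ : q k < q (k+1) := hsq.2.2.2.1 k hk hks
  have hP : 1 ≤ q k ∧ q k ≤ m := splitSeq_range hsq k hk (by omega)
  have hQ : 1 ≤ q (k+1) ∧ q (k+1) ≤ m := splitSeq_range hsq (k+1) (by omega) (by omega)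
  have hintsum : ∑ i ∈ Finset.Icc (q k + 1) (q (k+1) - 1), αE i
      = ∑ i ∈ Finset.Icc (q k + 1) (q (k+1) - 1), (n - α i) := by
    refine Finset.sum_congr rfl ?_
    intro j hj
    simp only [Finset.mem_Icc] at hj
    exact hint k hk hks j (by omega) (by omega)
  have hintle : ∑ i ∈ Finset.Icc (q k + 1) (q (k+1) - 1), (n - α i)
      ≤ ∑ i ∈ Finset.Icc (q k) (q (k+1) - 1), α i := by
    rcases Nat.lt_or_ge (q k + 1) (q (k+1)) with h2 | h2
    · have hmin := (hsq.2.2.2.2 k hk hks).2 (q (k+1) - 2) (by omega) (by omega)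
      have e : q (k+1) - 2 + 1 = q (k+1) - 1 := by omega
      rw [e] at hmin
      have hglue : ∑ i ∈ Finset.Icc (q k) (q (k+1) - 2), α i
          + ∑ i ∈ Finset.Icc (q (k+1) - 2 + 1) (q (k+1) - 1), α i
          = ∑ i ∈ Finset.Icc (q k) (q (k+1) - 1), α i :=
        sum_Icc_glue α _ _ _ (by omega) (by omega)
      rw [e] at hglue
      omega
    · have : Finset.Icc (q k + 1) (q (k+1) - 1) = ∅ := by
        apply Finset.Icc_eq_empty; omega
      rw [this]; simp
  have hvalk := hval k hk hks
  have hEQ : αE (q (k+1)) + ∑ i ∈ Finset.Icc (q k + 1) (q (k+1) - 1), αE i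
      = ∑ i ∈ Finset.Icc (q k) (q (k+1) - 1), α i := by omega
  have hglue2 : ∑ i ∈ Finset.Icc (q k + 1) (q (k+1) - 1), αE i
      + ∑ i ∈ Finset.Icc (q (k+1) - 1 + 1) (q (k+1)), αE i
      = ∑ i ∈ Finset.Icc (q k + 1) (q (k+1)), αE i :=
    sum_Icc_glue αE _ _ _ (by omega) (by omega)
  have e3 : q (k+1) - 1 + 1 = q (k+1) := by omega
  rw [e3] at hglue2
  have hQQ : ∑ i ∈ Finset.Icc (q (k+1)) (q (k+1)), αE i = αE (q (k+1)) := by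
    rw [Finset.Icc_self, Finset.sum_singleton]
  have hblock : ∑ i ∈ Finset.Icc (q k + 1) (q (k+1)), αE i
      = ∑ i ∈ Finset.Icc (q k) (q (k+1) - 1), α i := by omega
  refine ⟨hblock, ?_⟩
  have hineq := (hsq.2.2.2.2 k hk hks).1
  have hglue3 : ∑ i ∈ Finset.Icc (q k + 1) (q (k+1) - 1), (n - α i)
      + ∑ i ∈ Finset.Icc (q (k+1) - 1 + 1) (q (k+1)), (n - α i)
      = ∑ i ∈ Finset.Icc (q k + 1) (q (k+1)), (n - α i) :=
    sum_Icc_glue _ _ _ _ (by omega) (by omega)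
  rw [e3] at hglue3
  have hQQ2 : ∑ i ∈ Finset.Icc (q (k+1)) (q (k+1)), (n - α i) = n - α (q (k+1)) := by
    rw [Finset.Icc_self, Finset.sum_singleton]
  have hαQ : α (q (k+1)) ≤ n := hN (q (k+1)) (by omega) (by omega)
  omega

lemma boundLemma {m n : ℕ} {α αE : ℕ → ℕ} {s : ℕ} {q : ℕ → ℕ}
    (hsq : IsSplitSeq m n α s q)
    (hN : ∀ i, 1 ≤ i → i ≤ m → α i ≤ n)
    (hE1 : αE 1 = 0)
    (hint : ∀ k, 1 ≤ k → k < s → ∀ j, q k < j → j < q (k+1) → αE j = n - α j)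
    (hval : ∀ k, 1 ≤ k → k < s → αE (q (k+1)) =
      (∑ j ∈ Finset.Icc (q k) (q (k+1) - 1), α j)
        - ∑ j ∈ Finset.Icc (q k + 1) (q (k+1) - 1), αE j)
    (j : ℕ) (hj1 : 1 ≤ j) (hjm : j ≤ m) : α j + αE j ≤ n := by
  rcases Nat.eq_or_lt_of_le hj1 with h1 | h1
  · rw [← h1, hE1]
    have := hN 1 le_rfl (by omega); omega
  · obtain ⟨k, hk, hks, hqk, hqk1⟩ := splitSeq_cover hsq j h1 hjm
    rcases Nat.eq_or_lt_of_le hqk1 with heq | hlt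
    · rw [heq]
      exact (blockFacts hsq hN hint hval k hk hks).2
    · have := hint k hk hks j hqk hlt
      have := hN j (by omega) hjm
      omega

lemma strictLemma {m n : ℕ} {α αE : ℕ → ℕ} {s : ℕ} {q : ℕ → ℕ}
    (hsq : IsSplitSeq m n α s q)
    (hN : ∀ i, 1 ≤ i → i ≤ m → α i ≤ n)
    (hint : ∀ k, 1 ≤ k → k < s → ∀ j, q k < j → j < q (k+1) → αE j = n - α j)
    (hval : ∀ k, 1 ≤ k → k < s → αE (q (k+1)) =
      (∑ j ∈ Finset.Icc (q k) (q (k+1) - 1), α j)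
        - ∑ j ∈ Finset.Icc (q k + 1) (q (k+1) - 1), αE j)
    (k : ℕ) (hk : 1 ≤ k) (hks : k < s)
    (t : ℕ) (ht1 : q k + 2 ≤ t) (ht2 : t ≤ q (k+1)) :
    ∑ i ∈ Finset.Icc (t-1) (q (k+1) - 1), α i < ∑ i ∈ Finset.Icc t (q (k+1)), αE i := by
  have hPQ : q k < q (k+1) := hsq.2.2.2.1 k hk hks
  have hP : 1 ≤ q k ∧ q k ≤ m := splitSeq_range hsq k hk (by omega)
  have hblock := (blockFacts hsq hN hint hval k hk hks).1
  have hglueE : ∑ i ∈ Finset.Icc (q k + 1) (t-1), αE i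
      + ∑ i ∈ Finset.Icc (t-1+1) (q (k+1)), αE i
      = ∑ i ∈ Finset.Icc (q k + 1) (q (k+1)), αE i :=
    sum_Icc_glue αE _ _ _ (by omega) (by omega)
  have e1 : t - 1 + 1 = t := by omega
  rw [e1] at hglueE
  have hglueA : ∑ i ∈ Finset.Icc (q k) (t-2), α i
      + ∑ i ∈ Finset.Icc (t-2+1) (q (k+1) - 1), α i
      = ∑ i ∈ Finset.Icc (q k) (q (k+1) - 1), α i :=
    sum_Icc_glue α _ _ _ (by omega) (by omega)
  have e2 : t - 2 + 1 = t - 1 := by omega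
  rw [e2] at hglueA
  have hmin := (hsq.2.2.2.2 k hk hks).2 (t-2) (by omega) (by omega)
  rw [e2] at hmin
  have hintsum : ∑ i ∈ Finset.Icc (q k + 1) (t-1), αE i
      = ∑ i ∈ Finset.Icc (q k + 1) (t-1), (n - α i) := by
    refine Finset.sum_congr rfl ?_
    intro j hj
    simp only [Finset.mem_Icc] at hj
    exact hint k hk hks j (by omega) (by omega)
  omega

lemma partialLeLemma {m n : ℕ} {α αE : ℕ → ℕ} {s : ℕ} {q : ℕ → ℕ}
    (hsq : IsSplitSeq m n α s q)
    (hN : ∀ i, 1 ≤ i → i ≤ m → α i ≤ n)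
    (hint : ∀ k, 1 ≤ k → k < s → ∀ j, q k < j → j < q (k+1) → αE j = n - α j)
    (hval : ∀ k, 1 ≤ k → k < s → αE (q (k+1)) =
      (∑ j ∈ Finset.Icc (q k) (q (k+1) - 1), α j)
        - ∑ j ∈ Finset.Icc (q k + 1) (q (k+1) - 1), αE j)
    (k : ℕ) (hk : 1 ≤ k) (hks : k < s)
    (u : ℕ) (hu1 : q k < u) (hu2 : u ≤ q (k+1)) :
    ∑ i ∈ Finset.Icc (q k + 1) u, αE i ≤ ∑ i ∈ Finset.Icc (q k) (u-1), α i := by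
  have hPQ : q k < q (k+1) := hsq.2.2.2.1 k hk hks
  have hP : 1 ≤ q k ∧ q k ≤ m := splitSeq_range hsq k hk (by omega)
  rcases Nat.eq_or_lt_of_le hu2 with heq | hlt
  · subst heq
    exact le_of_eq (blockFacts hsq hN hint hval k hk hks).1
  · have hintsum : ∑ i ∈ Finset.Icc (q k + 1) u, αE i
        = ∑ i ∈ Finset.Icc (q k + 1) u, (n - α i) := by
      refine Finset.sum_congr rfl ?_
      intro j hj
      simp only [Finset.mem_Icc] at hj
      exact hint k hk hks j (by omega) (by omega)
    have hmin := (hsq.2.2.2.2 k hk hks).2 (u-1) (by omega) (by omega)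
    have e : u - 1 + 1 = u := by omega
    rw [e] at hmin
    omega

lemma sumEqLemma {m n : ℕ} {α αE : ℕ → ℕ} {s : ℕ} {q : ℕ → ℕ}
    (hsq : IsSplitSeq m n α s q)
    (hN : ∀ i, 1 ≤ i → i ≤ m → α i ≤ n)
    (hint : ∀ k, 1 ≤ k → k < s → ∀ j, q k < j → j < q (k+1) → αE j = n - α j)
    (hval : ∀ k, 1 ≤ k → k < s → αE (q (k+1)) =
      (∑ j ∈ Finset.Icc (q k) (q (k+1) - 1), α j)
        - ∑ j ∈ Finset.Icc (q k + 1) (q (k+1) - 1), αE j) :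
    ∀ k, 1 ≤ k → k ≤ s →
      ∑ i ∈ Finset.Icc 2 (q k), αE i = ∑ i ∈ Finset.Icc 1 (q k - 1), α i := by
  intro k hk
  induction k, hk using Nat.le_induction with
  | base =>
    intro _
    rw [hsq.2.1]
    simp
  | succ k hk ih =>
    intro hks
    have hks' : k < s := by omega
    have hPQ : q k < q (k+1) := hsq.2.2.2.1 k hk hks'
    have hP : 1 ≤ q k ∧ q k ≤ m := splitSeq_range hsq k hk (by omega)
    have hglueE : ∑ i ∈ Finset.Icc 2 (q k), αE i
        + ∑ i ∈ Finset.Icc (q k + 1) (q (k+1)), αE i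
        = ∑ i ∈ Finset.Icc 2 (q (k+1)), αE i :=
      sum_Icc_glue αE _ _ _ (by omega) (by omega)
    have hglueA : ∑ i ∈ Finset.Icc 1 (q k - 1), α i
        + ∑ i ∈ Finset.Icc (q k - 1 + 1) (q (k+1) - 1), α i
        = ∑ i ∈ Finset.Icc 1 (q (k+1) - 1), α i :=
      sum_Icc_glue α _ _ _ (by omega) (by omega)
    have e : q k - 1 + 1 = q k := by omega
    rw [e] at hglueA
    have hblock := (blockFacts hsq hN hint hval k hk hks').1
    have := ih (by omega)
    omega

lemma totalLemma {m n : ℕ} {α αE : ℕ → ℕ} {s : ℕ} {q : ℕ → ℕ}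
    (hsq : IsSplitSeq m n α s q)
    (hN : ∀ i, 1 ≤ i → i ≤ m → α i ≤ n)
    (hint : ∀ k, 1 ≤ k → k < s → ∀ j, q k < j → j < q (k+1) → αE j = n - α j)
    (hval : ∀ k, 1 ≤ k → k < s → αE (q (k+1)) =
      (∑ j ∈ Finset.Icc (q k) (q (k+1) - 1), α j)
        - ∑ j ∈ Finset.Icc (q k + 1) (q (k+1) - 1), αE j)
    (u : ℕ) (hum : u ≤ m) :
    ∑ i ∈ Finset.Icc 2 u, αE i ≤ ∑ i ∈ Finset.Icc 1 (u-1), α i := by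
  rcases Nat.lt_or_ge u 2 with h2 | h2
  · have : Finset.Icc 2 u = ∅ := by apply Finset.Icc_eq_empty; omega
    rw [this]; simp
  · obtain ⟨k, hk, hks, hqk, hqk1⟩ := splitSeq_cover hsq u (by omega) hum
    have hP : 1 ≤ q k ∧ q k ≤ m := splitSeq_range hsq k hk (by omega)
    have hglueE : ∑ i ∈ Finset.Icc 2 (q k), αE i
        + ∑ i ∈ Finset.Icc (q k + 1) u, αE i
        = ∑ i ∈ Finset.Icc 2 u, αE i :=
      sum_Icc_glue αE _ _ _ (by omega) (by omega)
    have hglueA : ∑ i ∈ Finset.Icc 1 (q k - 1), α i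
        + ∑ i ∈ Finset.Icc (q k - 1 + 1) (u - 1), α i
        = ∑ i ∈ Finset.Icc 1 (u - 1), α i :=
      sum_Icc_glue α _ _ _ (by omega) (by omega)
    have e : q k - 1 + 1 = q k := by omega
    rw [e] at hglueA
    have h1 := sumEqLemma hsq hN hint hval k hk (by omega)
    have h2' := partialLeLemma hsq hN hint hval k hk hks u hqk hqk1
    omega

def revSeq (m s : ℕ) (q : ℕ → ℕ) : ℕ → ℕ := fun k => m + 1 - q (s + 1 - k)

lemma psiRev_in {m : ℕ} {f : ℕ → ℕ} {i : ℕ} (h1 : 1 ≤ i) (h2 : i ≤ m) :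
    psiRev m f i = f (m + 1 - i) := by simp [psiRev, h1, h2]

lemma part1 {m n : ℕ} (hm : 0 < m) {α αE : ℕ → ℕ} {s : ℕ} {q : ℕ → ℕ}
    (hsq : IsSplitSeq m n α s q)
    (hN : ∀ i, 1 ≤ i → i ≤ m → α i ≤ n)
    (hE1 : αE 1 = 0)
    (hint : ∀ k, 1 ≤ k → k < s → ∀ j, q k < j → j < q (k+1) → αE j = n - α j)
    (hval : ∀ k, 1 ≤ k → k < s → αE (q (k+1)) =
      (∑ j ∈ Finset.Icc (q k) (q (k+1) - 1), α j)
        - ∑ j ∈ Finset.Icc (q k + 1) (q (k+1) - 1), αE j) :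
    memS m n (psiRev m αE) := by
  have hbound : ∀ j, 1 ≤ j → j ≤ m → α j + αE j ≤ n :=
    boundLemma hsq hN hE1 hint hval
  refine ⟨⟨?_, ?_⟩, ?_, ?_⟩
  · intro i h1 h2
    rw [psiRev_in h1 h2]
    have := hbound (m+1-i) (by omega) (by omega)
    omega
  · intro i hi
    simp only [psiRev]
    rw [if_neg]; omega
  · rw [psiRev_in hm le_rfl]
    have e : m + 1 - m = 1 := by omega
    rw [e, hE1]
  · intro t ht1 ht2
    have hm2 : 2 ≤ m := by omega
    have hL1 : ∑ i ∈ Finset.Icc t (m-1), psiRev m αE i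
        = ∑ i ∈ Finset.Icc t (m-1), αE (m+1-i) := by
      refine Finset.sum_congr rfl ?_
      intro i hi
      simp only [Finset.mem_Icc] at hi
      exact psiRev_in (by omega) (by omega)
    have hL2 : ∑ i ∈ Finset.Icc t (m-1), αE (m+1-i)
        = ∑ j ∈ Finset.Icc (m+1-(m-1)) (m+1-t), αE j :=
      sum_reflect m αE t (m-1) ht1 (by omega)
    have e1 : m + 1 - (m-1) = 2 := by omega
    rw [e1] at hL2
    have hR1 : ∑ i ∈ Finset.Icc (t+1) m, (n - psiRev m αE i)
        = ∑ i ∈ Finset.Icc (t+1) m, (n - αE (m+1-i)) := by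
      refine Finset.sum_congr rfl ?_
      intro i hi
      simp only [Finset.mem_Icc] at hi
      rw [psiRev_in (by omega) (by omega)]
    have hR2 : ∑ i ∈ Finset.Icc (t+1) m, (n - αE (m+1-i))
        = ∑ j ∈ Finset.Icc (m+1-m) (m+1-(t+1)), (n - αE j) :=
      sum_reflect m (fun j => n - αE j) (t+1) m (by omega) le_rfl
    have e2 : m + 1 - m = 1 := by omega
    have e3 : m + 1 - (t+1) = m - t := by omega
    rw [e2, e3] at hR2
    have htot := totalLemma hsq hN hint hval (m+1-t) (by omega)
    have e4 : m + 1 - t - 1 = m - t := by omega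
    rw [e4] at htot
    have hpw : ∑ j ∈ Finset.Icc 1 (m-t), α j ≤ ∑ j ∈ Finset.Icc 1 (m-t), (n - αE j) := by
      refine Finset.sum_le_sum ?_
      intro j hj
      simp only [Finset.mem_Icc] at hj
      have := hbound j (by omega) (by omega)
      omega
    rw [hL1, hL2, hR1, hR2]
    omega

lemma revSplit {m n : ℕ} (hm : 0 < m) {α αE : ℕ → ℕ} {s : ℕ} {q : ℕ → ℕ}
    (hsq : IsSplitSeq m n α s q)
    (hN : ∀ i, 1 ≤ i → i ≤ m → α i ≤ n)
    (hE1 : αE 1 = 0)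
    (hint : ∀ k, 1 ≤ k → k < s → ∀ j, q k < j → j < q (k+1) → αE j = n - α j)
    (hval : ∀ k, 1 ≤ k → k < s → αE (q (k+1)) =
      (∑ j ∈ Finset.Icc (q k) (q (k+1) - 1), α j)
        - ∑ j ∈ Finset.Icc (q k + 1) (q (k+1) - 1), αE j) :
    IsSplitSeq m n (psiRev m αE) s (revSeq m s q) := by
  have hbound : ∀ j, 1 ≤ j → j ≤ m → α j + αE j ≤ n :=
    boundLemma hsq hN hE1 hint hval
  have hrange : ∀ k, 1 ≤ k → k ≤ s → 1 ≤ q k ∧ q k ≤ m := splitSeq_range hsq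
  refine ⟨hsq.1, ?_, ?_, ?_, ?_⟩
  · show m + 1 - q (s + 1 - 1) = 1
    have e : s + 1 - 1 = s := by omega
    rw [e, hsq.2.2.1]; omega
  · show m + 1 - q (s + 1 - s) = m
    have e : s + 1 - s = 1 := by omega
    rw [e, hsq.2.1]; omega
  · intro k hk hks
    show m + 1 - q (s + 1 - k) < m + 1 - q (s + 1 - (k+1))
    have e1 : s + 1 - k = (s - k) + 1 := by omega
    have e2 : s + 1 - (k + 1) = s - k := by omega
    rw [e1, e2]
    have h1 := hsq.2.2.2.1 (s-k) (by omega) (by omega)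
    have h2 := hrange (s-k) (by omega) (by omega)
    have h3 := hrange (s-k+1) (by omega) (by omega)
    omega
  · intro k hk hks
    have e1 : s + 1 - k = (s - k) + 1 := by omega
    have e2 : s + 1 - (k + 1) = s - k := by omega
    have hK : 1 ≤ s - k := by omega
    have hKs : s - k < s := by omega
    have hPQ : q (s-k) < q (s-k+1) := hsq.2.2.2.1 (s-k) hK hKs
    have hP : 1 ≤ q (s-k) ∧ q (s-k) ≤ m := hrange (s-k) hK (by omega)
    have hQ : 1 ≤ q (s-k+1) ∧ q (s-k+1) ≤ m := hrange (s-k+1) (by omega) (by omega)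
    have hblock := (blockFacts ⟨hsq.1, hsq.2.1, hsq.2.2.1, hsq.2.2.2.1, hsq.2.2.2.2⟩
      hN hint hval (s-k) hK hKs).1
    constructor
    · show ∑ i ∈ Finset.Icc (revSeq m s q k) (revSeq m s q (k+1) - 1), psiRev m αE i
        ≤ ∑ i ∈ Finset.Icc (revSeq m s q k + 1) (revSeq m s q (k+1)), (n - psiRev m αE i)
      have eL : revSeq m s q k = m + 1 - q (s-k+1) := by
        show m + 1 - q (s+1-k) = _; rw [e1]
      have eR : revSeq m s q (k+1) = m + 1 - q (s-k) := by
        show m + 1 - q (s+1-(k+1)) = _; rw [e2]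
      rw [eL, eR]
      -- LHS
      have hL1 : ∑ i ∈ Finset.Icc (m+1-q (s-k+1)) (m+1-q (s-k) - 1), psiRev m αE i
          = ∑ i ∈ Finset.Icc (m+1-q (s-k+1)) (m+1-q (s-k) - 1), αE (m+1-i) := by
        refine Finset.sum_congr rfl ?_
        intro i hi; simp only [Finset.mem_Icc] at hi
        exact psiRev_in (by omega) (by omega)
      have hL2 : ∑ i ∈ Finset.Icc (m+1-q (s-k+1)) (m+1-q (s-k) - 1), αE (m+1-i)
          = ∑ j ∈ Finset.Icc (m+1-(m+1-q (s-k) - 1)) (m+1-(m+1-q (s-k+1))), αE j :=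
        sum_reflect m αE _ _ (by omega) (by omega)
      have eL2 : m+1-(m+1-q (s-k) - 1) = q (s-k) + 1 := by omega
      have eL3 : m+1-(m+1-q (s-k+1)) = q (s-k+1) := by omega
      rw [eL2, eL3] at hL2
      -- RHS
      have hR1 : ∑ i ∈ Finset.Icc (m+1-q (s-k+1) + 1) (m+1-q (s-k)), (n - psiRev m αE i)
          = ∑ i ∈ Finset.Icc (m+1-q (s-k+1) + 1) (m+1-q (s-k)), (n - αE (m+1-i)) := by
        refine Finset.sum_congr rfl ?_
        intro i hi; simp only [Finset.mem_Icc] at hi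
        rw [psiRev_in (by omega) (by omega)]
      have hR2 : ∑ i ∈ Finset.Icc (m+1-q (s-k+1) + 1) (m+1-q (s-k)), (n - αE (m+1-i))
          = ∑ j ∈ Finset.Icc (m+1-(m+1-q (s-k))) (m+1-(m+1-q (s-k+1) + 1)), (n - αE j) :=
        sum_reflect m (fun j => n - αE j) _ _ (by omega) (by omega)
      have eR2 : m+1-(m+1-q (s-k)) = q (s-k) := by omega
      have eR3 : m+1-(m+1-q (s-k+1) + 1) = q (s-k+1) - 1 := by omega
      rw [eR2, eR3] at hR2
      have hpw : ∑ j ∈ Finset.Icc (q (s-k)) (q (s-k+1) - 1), α j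
          ≤ ∑ j ∈ Finset.Icc (q (s-k)) (q (s-k+1) - 1), (n - αE j) := by
        refine Finset.sum_le_sum ?_
        intro j hj; simp only [Finset.mem_Icc] at hj
        have := hbound j (by omega) (by omega)
        omega
      rw [hL1, hL2, hR1, hR2]
      omega
    · intro r hr1 hr2
      simp only [show revSeq m s q k = m + 1 - q (s-k+1) from by
            show m + 1 - q (s+1-k) = _; rw [e1],
          show revSeq m s q (k+1) = m + 1 - q (s-k) from by
            show m + 1 - q (s+1-(k+1)) = _; rw [e2]] at hr1 hr2 ⊢
      intro hcon
      -- translate both sums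
      have hL1 : ∑ i ∈ Finset.Icc (m+1-q (s-k+1)) r, psiRev m αE i
          = ∑ i ∈ Finset.Icc (m+1-q (s-k+1)) r, αE (m+1-i) := by
        refine Finset.sum_congr rfl ?_
        intro i hi; simp only [Finset.mem_Icc] at hi
        exact psiRev_in (by omega) (by omega)
      have hL2 : ∑ i ∈ Finset.Icc (m+1-q (s-k+1)) r, αE (m+1-i)
          = ∑ j ∈ Finset.Icc (m+1-r) (m+1-(m+1-q (s-k+1))), αE j :=
        sum_reflect m αE _ _ (by omega) (by omega)
      have eL3 : m+1-(m+1-q (s-k+1)) = q (s-k+1) := by omega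
      rw [eL3] at hL2
      have hR1 : ∑ i ∈ Finset.Icc (m+1-q (s-k+1) + 1) (r+1), (n - psiRev m αE i)
          = ∑ i ∈ Finset.Icc (m+1-q (s-k+1) + 1) (r+1), (n - αE (m+1-i)) := by
        refine Finset.sum_congr rfl ?_
        intro i hi; simp only [Finset.mem_Icc] at hi
        rw [psiRev_in (by omega) (by omega)]
      have hR2 : ∑ i ∈ Finset.Icc (m+1-q (s-k+1) + 1) (r+1), (n - αE (m+1-i))
          = ∑ j ∈ Finset.Icc (m+1-(r+1)) (m+1-(m+1-q (s-k+1) + 1)), (n - αE j) :=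
        sum_reflect m (fun j => n - αE j) _ _ (by omega) (by omega)
      have eR3 : m+1-(m+1-q (s-k+1) + 1) = q (s-k+1) - 1 := by omega
      have eR4 : m+1-(r+1) = m - r := by omega
      rw [eR3, eR4] at hR2
      -- interior: n - αE j = α j on Icc (m-r) (q (s-k+1) - 1)
      have hR3 : ∑ j ∈ Finset.Icc (m-r) (q (s-k+1) - 1), (n - αE j)
          = ∑ j ∈ Finset.Icc (m-r) (q (s-k+1) - 1), α j := by
        refine Finset.sum_congr rfl ?_
        intro j hj; simp only [Finset.mem_Icc] at hj
        have h1 := hint (s-k) hK hKs j (by omega) (by omega)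
        have h2 := hN j (by omega) (by omega)
        omega
      have hstrict := strictLemma ⟨hsq.1, hsq.2.1, hsq.2.2.1, hsq.2.2.2.1, hsq.2.2.2.2⟩
        hN hint hval (s-k) hK hKs (m+1-r) (by omega) (by omega)
      have e5 : m + 1 - r - 1 = m - r := by omega
      rw [e5] at hstrict
      rw [hL1, hL2] at hcon
      rw [hR1, hR2, hR3] at hcon
      omega

/-- The map `ψ(α) = (αᴱ_m, …, αᴱ_2, 0)` is a well-defined involution on
`S_{m,n}`: `ψ(α) ∈ S_{m,n}` and `ψ(ψ(α)) = α`. -/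
theorem stmt_15 (m n : ℕ) (hm : 0 < m) (hn : 0 < n) (α αE : ℕ → ℕ)
    (hα : memS m n α) (hαE : IsForbidden m n α αE) :
    memS m n (psiRev m αE) ∧
    ∀ βE : ℕ → ℕ, IsForbidden m n (psiRev m αE) βE → psiRev m βE = α := by
  obtain ⟨⟨hNα, hZα⟩, hαm, hSα⟩ := hα
  obtain ⟨hEz, s, q, hsq, hE1, hint, hval⟩ := hαE
  have hbound : ∀ j, 1 ≤ j → j ≤ m → α j + αE j ≤ n :=
    boundLemma hsq hNα hE1 hint hval
  have hrange : ∀ k, 1 ≤ k → k ≤ s → 1 ≤ q k ∧ q k ≤ m := splitSeq_range hsq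
  refine ⟨part1 hm hsq hNα hE1 hint hval, ?_⟩
  intro βE hβE
  obtain ⟨hz'', s'', q'', hsq'', h1'', hint'', hval''⟩ := hβE
  have hsq' : IsSplitSeq m n (psiRev m αE) s (revSeq m s q) :=
    revSplit hm hsq hNα hE1 hint hval
  obtain ⟨hss, hqq⟩ := splitSeq_unique hsq'' hsq'
  rw [hss] at hqq hint'' hval''
  -- interior values of βE
  have hInt : ∀ k, 1 ≤ k → k < s → ∀ j, revSeq m s q k < j → j < revSeq m s q (k+1) →
      βE j = α (m+1-j) := by
    intro k hk hks j hj1 hj2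
    have e1 := hqq k hk (by omega)
    have e2 := hqq (k+1) (by omega) (by omega)
    have h := hint'' k hk hks j (by rw [e1]; exact hj1) (by rw [e2]; exact hj2)
    have eA : revSeq m s q k = m + 1 - q (s-k+1) := by
      show m + 1 - q (s+1-k) = _; rw [show s+1-k = s-k+1 from by omega]
    have eB : revSeq m s q (k+1) = m + 1 - q (s-k) := by
      show m + 1 - q (s+1-(k+1)) = _; rw [show s+1-(k+1) = s-k from by omega]
    rw [eA] at hj1
    rw [eB] at hj2
    have hK : 1 ≤ s - k := by omega
    have hKs : s - k < s := by omega
    have hP := hrange (s-k) hK (by omega)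
    have hQ := hrange (s-k+1) (by omega) (by omega)
    have hPQ : q (s-k) < q (s-k+1) := hsq.2.2.2.1 (s-k) hK hKs
    have hj1m : 1 ≤ j := by omega
    have hjm : j ≤ m := by omega
    rw [psiRev_in hj1m hjm] at h
    have hintj := hint (s-k) hK hKs (m+1-j) (by omega) (by omega)
    have := hNα (m+1-j) (by omega) (by omega)
    omega
  have hkey : ∀ j, 1 ≤ j → j ≤ m → βE j = α (m+1-j) := by
    intro j hj1 hjm
    rcases Nat.eq_or_lt_of_le hj1 with h1 | h1
    · rw [← h1, show m + 1 - 1 = m from by omega, hαm]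
      exact h1''
    · obtain ⟨k, hk, hks, hc1, hc2⟩ := splitSeq_cover hsq' j h1 hjm
      rcases Nat.eq_or_lt_of_le hc2 with heq | hlt
      · -- j = revSeq m s q (k+1)
        have e1 := hqq k hk (by omega)
        have e2 := hqq (k+1) (by omega) (by omega)
        have eA : revSeq m s q k = m + 1 - q (s-k+1) := by
          show m + 1 - q (s+1-k) = _; rw [show s+1-k = s-k+1 from by omega]
        have eB : revSeq m s q (k+1) = m + 1 - q (s-k) := by
          show m + 1 - q (s+1-(k+1)) = _; rw [show s+1-(k+1) = s-k from by omega]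
        have hK : 1 ≤ s - k := by omega
        have hKs : s - k < s := by omega
        have hP := hrange (s-k) hK (by omega)
        have hQ := hrange (s-k+1) (by omega) (by omega)
        have hPQ : q (s-k) < q (s-k+1) := hsq.2.2.2.1 (s-k) hK hKs
        have hv := hval'' k hk hks
        rw [e1, e2, eA, eB] at hv
        rw [eB] at heq
        -- S1 : sum of psiRev over the block = ∑ Icc P (Q-1) α
        have hS1a : ∑ i ∈ Finset.Icc (m+1-q (s-k+1)) (m+1-q (s-k) - 1), psiRev m αE i
            = ∑ i ∈ Finset.Icc (m+1-q (s-k+1)) (m+1-q (s-k) - 1), αE (m+1-i) := by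
          refine Finset.sum_congr rfl ?_
          intro i hi; simp only [Finset.mem_Icc] at hi
          exact psiRev_in (by omega) (by omega)
        have hS1b : ∑ i ∈ Finset.Icc (m+1-q (s-k+1)) (m+1-q (s-k) - 1), αE (m+1-i)
            = ∑ i ∈ Finset.Icc (m+1-(m+1-q (s-k) - 1)) (m+1-(m+1-q (s-k+1))), αE i :=
          sum_reflect m αE _ _ (by omega) (by omega)
        rw [show m+1-(m+1-q (s-k) - 1) = q (s-k) + 1 from by omega,
            show m+1-(m+1-q (s-k+1)) = q (s-k+1) from by omega] at hS1b
        have hblock := (blockFacts hsq hNα hint hval (s-k) hK hKs).1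
        -- S2 : sum of βE over interior = ∑ Icc (P+1) (Q-1) α
        have hS2a : ∑ i ∈ Finset.Icc (m+1-q (s-k+1) + 1) (m+1-q (s-k) - 1), βE i
            = ∑ i ∈ Finset.Icc (m+1-q (s-k+1) + 1) (m+1-q (s-k) - 1), α (m+1-i) := by
          refine Finset.sum_congr rfl ?_
          intro i hi; simp only [Finset.mem_Icc] at hi
          exact hInt k hk hks i (by rw [eA]; omega) (by rw [eB]; omega)
        have hS2b : ∑ i ∈ Finset.Icc (m+1-q (s-k+1) + 1) (m+1-q (s-k) - 1), α (m+1-i)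
            = ∑ i ∈ Finset.Icc (m+1-(m+1-q (s-k) - 1)) (m+1-(m+1-q (s-k+1) + 1)), α i :=
          sum_reflect m α _ _ (by omega) (by omega)
        rw [show m+1-(m+1-q (s-k) - 1) = q (s-k) + 1 from by omega,
            show m+1-(m+1-q (s-k+1) + 1) = q (s-k+1) - 1 from by omega] at hS2b
        -- glue: α over Icc P (Q-1) = α P + α over Icc (P+1) (Q-1)
        have hglue : ∑ i ∈ Finset.Icc (q (s-k)) (q (s-k)), α i
            + ∑ i ∈ Finset.Icc (q (s-k) + 1) (q (s-k+1) - 1), α i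
            = ∑ i ∈ Finset.Icc (q (s-k)) (q (s-k+1) - 1), α i :=
          sum_Icc_glue α _ _ _ (by omega) (by omega)
        have hsingle : ∑ i ∈ Finset.Icc (q (s-k)) (q (s-k)), α i = α (q (s-k)) := by
          rw [Finset.Icc_self, Finset.sum_singleton]
        rw [heq, show m + 1 - (m + 1 - q (s-k)) = q (s-k) from by omega]
        omega
      · exact hInt k hk hks j hc1 hlt
  funext i
  by_cases hi : 1 ≤ i ∧ i ≤ m
  · rw [psiRev_in hi.1 hi.2, hkey (m+1-i) (by omega) (by omega),
      show m+1-(m+1-i) = i from by omega]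
  · simp only [psiRev, if_neg hi]
    exact (hZα i (by omega)).symm
end
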